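/- arXiv:1809.04238 — 9 statements merged into one kernel-verified Lean document; each statement's English description precedes it below -/
import Mathlib

section
/- Let d ∈ {1,2,3} and let p = p(d) (p(1) = 3, p(2) = 2√2, p(3) = (1+√17)/2). Suppose u : (1,∞) → ℝ is twice differentiable, satisfies the radial equation u''(r) + ((d−1)/r)·u'(r) = u(r)² for all r > 1, satisfies u(r) ≥ 2(4−d)/r² for all r > 1, and r²·u(r) → 2(4−d) as r → ∞. Then there exist constants C > 1 and c ≥ 0 such that u(r) ≤ (2(4−d)/r²)·(1 + c·r^{2−p}) for all r ≥ C. -/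
/-!
With `A = 2(4 - d)` and `g = r²u - A`, the equation becomes `r²g'' + (d - 5)rg' - (8 - 2d)g = g²`,
and the linear operator on the left annihilates `r^L` for `L = 2 - p`, the negative root of the
indicial equation `L² + (d - 6)L + 2d - 8 = 0`. Choose `c` with `w = g - c r^L` vanishing at
`r = 2`. At a critical point where `w > 0` we get `r²w'' = (8 - 2d)w + g² > 0`, so `w` has no
positive local maximum on `(2, ∞)`; as `w → 0` at infinity, `w ≤ 0` on `[2, ∞)`.
-/

open Real Filter Set Topology

theorem IsLocalMax.hasDerivAt_deriv_nonpos {w w' : ℝ → ℝ} {x m : ℝ} (hmax : IsLocalMax w x)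
    (hw : ∀ᶠ y in 𝓝 x, HasDerivAt w (w' y) y) (hw' : HasDerivAt w' m x) : m ≤ 0 := by
  by_contra! hm
  have hderiv : deriv w =ᶠ[𝓝 x] w' := hw.mono fun y hy => hy.deriv
  have hmin : IsLocalMin w x :=
    isLocalMin_of_deriv_deriv_pos (by rwa [hderiv.deriv_eq, hw'.deriv])
      (by rw [hderiv.self_of_nhds, hmax.hasDerivAt_eq_zero hw.self_of_nhds])
      hw.self_of_nhds.continuousAt
  -- a point that is both a local maximum and a local minimum has a flat neighbourhood
  have hflat : w' =ᶠ[𝓝 x] fun _ => 0 := by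
    have hconst : w =ᶠ[𝓝 x] fun _ => w x :=
      (hmax.and hmin).mono fun y hy => le_antisymm hy.1 hy.2
    filter_upwards [hw, hconst.eventually_nhds] with y hy hy'
    exact hy.unique ((hasDerivAt_const y (w x)).congr_of_eventuallyEq hy')
  have := (hw'.congr_of_eventuallyEq hflat.symm).unique (hasDerivAt_const x 0)
  linarith

theorem nonpos_of_tendsto_zero_of_not_isLocalMax {w : ℝ → ℝ} {a : ℝ}
    (hcont : ContinuousOn w (Ici a)) (ha : w a ≤ 0) (hlim : Tendsto w atTop (𝓝 0))
    (hmax : ∀ x > a, 0 < w x → ¬IsLocalMax w x) : ∀ x ≥ a, w x ≤ 0 := by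
  by_contra! ⟨x₀, hx₀a, hx₀⟩
  obtain ⟨M, hM⟩ := (hlim.eventually_lt_const hx₀).exists_forall_of_atTop
  set b := max M x₀
  -- beyond `b` the function stays below `w x₀`, so its maximum on `[a, b]` is a local maximum
  obtain ⟨x, hx, hxmax⟩ := isCompact_Icc.exists_isMaxOn ⟨x₀, hx₀a, le_max_right M x₀⟩
    (hcont.mono Icc_subset_Ici_self)
  have hx₀x : w x₀ ≤ w x := hxmax ⟨hx₀a, le_max_right M x₀⟩
  have hxa : a < x := hx.1.lt_of_ne (by rintro rfl; linarith)
  refine hmax x hxa (hx₀.trans_le hx₀x) (mem_of_superset (Ioi_mem_nhds hxa) fun y hy => ?_)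
  by_cases hyb : y ≤ b
  · exact hxmax ⟨le_of_lt hy, hyb⟩
  · exact ((hM y ((le_max_left M x₀).trans (not_le.1 hyb).le)).trans_le hx₀x).le

theorem nonpos_of_tendsto_zero_of_deriv_deriv_pos {w w' w'' : ℝ → ℝ} {a : ℝ}
    (hw : ∀ x ≥ a, HasDerivAt w (w' x) x) (hw' : ∀ x > a, HasDerivAt w' (w'' x) x)
    (ha : w a ≤ 0) (hlim : Tendsto w atTop (𝓝 0))
    (hcrit : ∀ x > a, 0 < w x → w' x = 0 → 0 < w'' x) : ∀ x ≥ a, w x ≤ 0 := by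
  refine nonpos_of_tendsto_zero_of_not_isLocalMax
    (fun x hx => (hw x hx).continuousAt.continuousWithinAt) ha hlim fun x hx hpos hmax => ?_
  have := hmax.hasDerivAt_deriv_nonpos
    ((eventually_gt_nhds hx).mono fun y hy => hw y hy.le) (hw' x hx)
  linarith [hcrit x hx hpos (hmax.hasDerivAt_eq_zero (hw x hx.le))]

section Comparison

variable {d L : ℝ}

theorem rpow_euler_eq_zero (hind : L ^ 2 + (d - 6) * L + 2 * d - 8 = 0) {r : ℝ} (hr : 0 < r) :
    r ^ 2 * (L * (L - 1) * r ^ (L - 2)) + (d - 5) * r * (L * r ^ (L - 1))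
      - (8 - 2 * d) * r ^ L = 0 := by
  have h1 : r ^ (L - 1) * r = r ^ L := by rw [← rpow_add_one hr.ne']; norm_num
  have h2 : r ^ (L - 2) * r ^ 2 = r ^ L := by
    rw [← rpow_natCast, ← rpow_add hr]; norm_num
  linear_combination r ^ L * hind + (d - 5) * L * h1 + L * (L - 1) * h2

theorem sq_mul_euler_eq_sq {r u₀ u₁ u₂ : ℝ} (hr : r ≠ 0) (h : u₂ + (d - 1) / r * u₁ = u₀ ^ 2) :
    r ^ 2 * (2 * u₀ + 4 * r * u₁ + r ^ 2 * u₂) + (d - 5) * r * (2 * r * u₀ + r ^ 2 * u₁)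
      - (8 - 2 * d) * (r ^ 2 * u₀ - 2 * (4 - d)) = (r ^ 2 * u₀ - 2 * (4 - d)) ^ 2 := by
  field_simp at h
  linear_combination r ^ 3 * h

theorem sq_mul_sub_le_mul_rpow (hd : d < 4) (hL : L < 0)
    (hind : L ^ 2 + (d - 6) * L + 2 * d - 8 = 0) {u : ℝ → ℝ}
    (hdiff : ∀ r > (1 : ℝ), DifferentiableAt ℝ u r)
    (hdiff' : ∀ r > (1 : ℝ), DifferentiableAt ℝ (deriv u) r)
    (heq : ∀ r > (1 : ℝ), deriv (deriv u) r + (d - 1) / r * deriv u r = u r ^ 2)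
    (hlim : Tendsto (fun r => r ^ 2 * u r) atTop (𝓝 (2 * (4 - d)))) {a : ℝ} (ha : 1 < a) :
    ∀ r ≥ a, r ^ 2 * u r - 2 * (4 - d) ≤ (a ^ 2 * u a - 2 * (4 - d)) / a ^ L * r ^ L := by
  set A := 2 * (4 - d)
  set c := (a ^ 2 * u a - A) / a ^ L
  let w : ℝ → ℝ := fun r => r ^ 2 * u r - A - c * r ^ L
  let w' : ℝ → ℝ := fun r => 2 * r * u r + r ^ 2 * deriv u r - c * (L * r ^ (L - 1))
  let w'' : ℝ → ℝ := fun r =>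
    2 * u r + 4 * r * deriv u r + r ^ 2 * deriv (deriv u) r - c * (L * (L - 1) * r ^ (L - 2))
  have hw : ∀ r > (1 : ℝ), HasDerivAt w (w' r) r := fun r hr => by
    have := (((hasDerivAt_pow 2 r).fun_mul (hdiff r hr).hasDerivAt).sub_const A).fun_sub
      ((hasDerivAt_rpow_const (p := L) (Or.inl (by positivity))).const_mul c)
    exact this.congr_deriv (by simp only [w']; ring)
  have hw' : ∀ r > (1 : ℝ), HasDerivAt w' (w'' r) r := fun r hr => by
    have := ((((hasDerivAt_id r).const_mul 2).fun_mul (hdiff r hr).hasDerivAt).fun_add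
      ((hasDerivAt_pow 2 r).fun_mul (hdiff' r hr).hasDerivAt)).fun_sub
      (((hasDerivAt_rpow_const (p := L - 1) (Or.inl (by positivity))).const_mul L).const_mul c)
    exact this.congr_deriv (by simp only [w'', id, show L - 1 - 1 = L - 2 by ring]; ring)
  have hcrit : ∀ r > a, 0 < w r → w' r = 0 → 0 < w'' r := fun r hr hpos hw'r => by
    have hr : 0 < r := by linarith
    have key : r ^ 2 * w'' r = (8 - 2 * d) * w r + (r ^ 2 * u r - A) ^ 2 := by
      simp only [w, w', w''] at hw'r ⊢
      linear_combination sq_mul_euler_eq_sq hr.ne' (heq r (by linarith))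
        - c * rpow_euler_eq_zero hind hr - (d - 5) * r * hw'r
    have : 0 < r ^ 2 * w'' r := by rw [key]; nlinarith [sq_nonneg (r ^ 2 * u r - A)]
    exact pos_of_mul_pos_right this (by positivity)
  have hwa : w a = 0 := by
    simp only [w, c]; field_simp; ring
  have hwlim : Tendsto w atTop (𝓝 0) := by
    have := (hlim.sub_const A).sub ((tendsto_rpow_neg_atTop (y := -L) (by linarith)).const_mul c)
    simpa [w] using this
  intro r hr
  have := nonpos_of_tendsto_zero_of_deriv_deriv_pos (fun x hx => hw x (by linarith))
    (fun x hx => hw' x (by linarith)) hwa.le hwlim hcrit r hr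
  simp only [w] at this; linarith

end Comparison

theorem critical_exponent_spec {d : ℕ} {p : ℝ}
    (hp : (d = 1 ∧ p = 3) ∨ (d = 2 ∧ p = 2 * Real.sqrt 2) ∨
      (d = 3 ∧ p = (1 + Real.sqrt 17) / 2)) :
    (d : ℝ) < 4 ∧ 2 < p ∧ p ^ 2 + (2 - d) * p + 4 * d - 16 = 0 := by
  rcases hp with ⟨rfl, rfl⟩ | ⟨rfl, rfl⟩ | ⟨rfl, rfl⟩
  · norm_num
  · have h2 := sq_sqrt (show (0 : ℝ) ≤ 2 by norm_num)
    refine ⟨by norm_num, by nlinarith [sqrt_nonneg 2], by push_cast; linear_combination 4 * h2⟩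
  · have h17 := sq_sqrt (show (0 : ℝ) ≤ 17 by norm_num)
    refine ⟨by norm_num, by nlinarith [sqrt_nonneg 17], ?_⟩
    push_cast; linear_combination h17 / 4

theorem stmt0_general (d : ℕ) (p : ℝ)
    (hp : (d = 1 ∧ p = 3) ∨ (d = 2 ∧ p = 2 * Real.sqrt 2) ∨
      (d = 3 ∧ p = (1 + Real.sqrt 17) / 2))
    (u : ℝ → ℝ)
    (hdiff : ∀ r > (1 : ℝ), DifferentiableAt ℝ u r)
    (hdiff' : ∀ r > (1 : ℝ), DifferentiableAt ℝ (deriv u) r)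
    (heq : ∀ r > (1 : ℝ), deriv (deriv u) r + ((d : ℝ) - 1) / r * deriv u r = (u r) ^ 2)
    (hlb : ∀ r > (1 : ℝ), 2 * (4 - (d : ℝ)) / r ^ 2 ≤ u r)
    (hlim : Tendsto (fun r : ℝ => r ^ 2 * u r) atTop (nhds (2 * (4 - (d : ℝ))))) :
    ∃ C c : ℝ, 1 < C ∧ 0 ≤ c ∧
      ∀ r ≥ C, u r ≤ (2 * (4 - (d : ℝ)) / r ^ 2) * (1 + c * r ^ (2 - p)) := by
  obtain ⟨hd, hp2, hpoly⟩ := critical_exponent_spec hp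
  have hbound := sq_mul_sub_le_mul_rpow hd (L := 2 - p) (by linarith) (by linear_combination hpoly)
    hdiff hdiff' heq hlim one_lt_two
  set A := 2 * (4 - (d : ℝ))
  set c := (2 ^ 2 * u 2 - A) / 2 ^ (2 - p)
  have hA : 0 < A := by linarith
  have hc : 0 ≤ c := by
    have := hlb 2 one_lt_two
    rw [div_le_iff₀ (by norm_num)] at this
    exact div_nonneg (by linarith) (by positivity)
  refine ⟨2, c / A, one_lt_two, by positivity, fun r hr => ?_⟩
  calc u r ≤ (A + c * r ^ (2 - p)) / r ^ 2 := by
        rw [le_div_iff₀ (by positivity)]; linarith [hbound r hr]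
    _ = A / r ^ 2 * (1 + c / A * r ^ (2 - p)) := by field_simp

/-- Proposition 3.2 (radial form): asymptotic upper bound on a solution of the
radial equation `u'' + ((d-1)/r) u' = u²` dominating the very singular solution. -/
theorem stmt0 (d : ℕ) (hd : d = 1 ∨ d = 2 ∨ d = 3) (p : ℝ)
    (hp : (d = 1 ∧ p = 3) ∨ (d = 2 ∧ p = 2 * Real.sqrt 2) ∨
      (d = 3 ∧ p = (1 + Real.sqrt 17) / 2))
    (u : ℝ → ℝ)
    (hdiff : ∀ r > (1 : ℝ), DifferentiableAt ℝ u r)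
    (hdiff' : ∀ r > (1 : ℝ), DifferentiableAt ℝ (deriv u) r)
    (heq : ∀ r > (1 : ℝ), deriv (deriv u) r + ((d : ℝ) - 1) / r * deriv u r = (u r) ^ 2)
    (hlb : ∀ r > (1 : ℝ), 2 * (4 - (d : ℝ)) / r ^ 2 ≤ u r)
    (hlim : Tendsto (fun r : ℝ => r ^ 2 * u r) atTop (nhds (2 * (4 - (d : ℝ))))) :
    ∃ C c : ℝ, 1 < C ∧ 0 ≤ c ∧
      ∀ r ≥ C, u r ≤ (2 * (4 - (d : ℝ)) / r ^ 2) * (1 + c * r ^ (2 - p)) :=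
  stmt0_general d p hp u hdiff hdiff' heq hlb hlim
end

section
/- Let d ∈ {1,2,3} and let p = p(d) (p(1) = 3, p(2) = 2√2, p(3) = (1+√17)/2). Suppose u : (1,∞) → ℝ is twice differentiable, satisfies the radial equation u''(r) + ((d−1)/r)·u'(r) = u(r)² for all r > 1, satisfies u(r) ≥ 2(4−d)/r² for all r > 1, and r²·u(r) → 2(4−d) as r → ∞. Then: (i) there exist constants C > 0 and c > 0 such that u(r) ≤ 2(4−d)/r² + c·r^{−p} for all r ≥ C; and (ii) there exists a constant K > 2 such that u(r) ≤ 3(4−d)·r^{−2} for all r ≥ K. -/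
open Real Filter

lemma secondDeriv_nonpos_of_isLocalMax {f : ℝ → ℝ} {a : ℝ}
    (hmax : IsLocalMax f a)
    (hf : ∀ᶠ x in nhds a, DifferentiableAt ℝ f x)
    (hf'' : DifferentiableAt ℝ (deriv f) a) :
    deriv (deriv f) a ≤ 0 := by
  by_contra hpos
  push_neg at hpos
  have h0 : deriv f a = 0 := hmax.deriv_eq_zero
  have hslope := hf''.hasDerivAt
  rw [hasDerivAt_iff_tendsto_slope] at hslope
  have hslope' : Tendsto (slope (deriv f) a) (nhdsWithin a (Set.Ioi a))
      (nhds (deriv (deriv f) a)) :=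
    hslope.mono_left (nhdsWithin_mono a (by intro x hx; exact ne_of_gt hx))
  have hev : ∀ᶠ x in nhdsWithin a (Set.Ioi a), 0 < slope (deriv f) a x :=
    hslope'.eventually (eventually_gt_nhds hpos)
  have hev2 : ∀ᶠ x in nhdsWithin a (Set.Ioi a), 0 < deriv f x := by
    filter_upwards [hev, self_mem_nhdsWithin] with x hx hx'
    have hxa : 0 < x - a := sub_pos.2 hx'
    rw [slope_def_field, h0, sub_zero] at hx
    rcases div_pos_iff.mp hx with ⟨h1, _⟩ | ⟨_, h2⟩
    · exact h1
    · exact absurd hxa (by linarith)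
  rcases (nhdsGT_basis a).eventually_iff.mp hev2 with ⟨b, hb, hball⟩
  rcases (nhds_basis_Ioo a).eventually_iff.mp (hf.and hmax) with ⟨⟨l, r⟩, ⟨hl, hr⟩, hball2⟩
  set b' := min b r with hb'
  have hab' : a < b' := lt_min hb hr
  set m := (a + b') / 2 with hm
  have ham : a < m := by simp [hm]; linarith
  have hmb : m < b' := by simp [hm]; linarith
  have hmono : StrictMonoOn f (Set.Icc a m) := by
    apply strictMonoOn_of_deriv_pos (convex_Icc a m)
    · intro x hx
      exact ((hball2 ⟨by linarith [hx.1], by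
        have := hx.2; have : x ≤ m := this; simp only [hb'] at hmb
        have hmr : m < r := lt_of_lt_of_le hmb (min_le_right b r)
        linarith⟩).1).continuousAt.continuousWithinAt
    · intro x hx
      rw [interior_Icc] at hx
      have hmb2 : m < b := lt_of_lt_of_le hmb (min_le_left b r)
      exact hball ⟨hx.1, hx.2.trans hmb2⟩
  have hlt : f a < f m := hmono ⟨le_rfl, ham.le⟩ ⟨ham.le, le_rfl⟩ ham
  have hle : f m ≤ f a := (hball2 ⟨by linarith, by
    have hmr : m < r := lt_of_lt_of_le hmb (min_le_right b r); linarith⟩).2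
  linarith

lemma hasDerivAt_rpow' (a : ℝ) {r : ℝ} (hr : 0 < r) :
    HasDerivAt (fun x : ℝ => x ^ a) (a * r ^ (a - 1)) r :=
  Real.hasDerivAt_rpow_const (Or.inl hr.ne')

lemma arith_contra (D A p c U U1 U2 I T : ℝ)
    (hD1 : 1 ≤ D) (hApos : 0 < A) (hA8 : A = 8 - 2 * D)
    (hpid : p * (p + 2 - D) = 2 * A) (hcpos : 0 < c) (hI : 0 < I) (hT : 0 < T)
    (F1 : U1 - A * (-2 * (I * I * I)) - c * (-p * (T * I)) = 0)
    (F2 : U2 - A * (-2 * ((-2 - 1) * (I * I * I * I)))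
        - c * (-p * ((-p - 1) * (T * I * I))) ≤ 0)
    (F3 : U2 + (D - 1) * I * U1 = U ^ 2)
    (F4 : A * (I * I) ≤ U)
    (F5 : 0 < U - A * (I * I) - c * T) : False := by
  have e1 : U2 = U ^ 2 - (D - 1) * I * U1 := by linarith
  have e2 : U1 = -(2 * A * (I * I * I)) - c * (p * (T * I)) := by linarith
  have key_id : U ^ 2 - A ^ 2 * (I * I * I * I) - 2 * A * c * (T * (I * I))
      = U2 - A * (-2 * ((-2 - 1) * (I * I * I * I)))
        - c * (-p * ((-p - 1) * (T * I * I))) := by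
    rw [e1, e2]
    linear_combination (-(I * I * I * I) * A) * hA8 + (c * (T * (I * I))) * hpid
  have G2 : U ^ 2 - A ^ 2 * (I * I * I * I) - 2 * A * c * (T * (I * I)) ≤ 0 := by
    rw [key_id]; exact F2
  have hUA : 0 < U + A * (I * I) := by nlinarith [mul_pos hApos (mul_pos hI hI)]
  have h7 : c * T * (U + A * (I * I)) < (U - A * (I * I)) * (U + A * (I * I)) :=
    mul_lt_mul_of_pos_right (by linarith) hUA
  have h8 : c * T * (2 * (A * (I * I))) ≤ c * T * (U + A * (I * I)) :=
    mul_le_mul_of_nonneg_left (by linarith) (mul_pos hcpos hT).le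
  nlinarith [G2, h7, h8]

/-- Corollary 3.3 (radial form). -/
theorem stmt1 (d : ℕ) (hd : d = 1 ∨ d = 2 ∨ d = 3) (p : ℝ)
    (hp : (d = 1 ∧ p = 3) ∨ (d = 2 ∧ p = 2 * Real.sqrt 2) ∨
      (d = 3 ∧ p = (1 + Real.sqrt 17) / 2))
    (u : ℝ → ℝ)
    (hdiff : ∀ r > (1 : ℝ), DifferentiableAt ℝ u r)
    (hdiff' : ∀ r > (1 : ℝ), DifferentiableAt ℝ (deriv u) r)
    (heq : ∀ r > (1 : ℝ), deriv (deriv u) r + ((d : ℝ) - 1) / r * deriv u r = (u r) ^ 2)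
    (hlb : ∀ r > (1 : ℝ), 2 * (4 - (d : ℝ)) / r ^ 2 ≤ u r)
    (hlim : Tendsto (fun r : ℝ => r ^ 2 * u r) atTop (nhds (2 * (4 - (d : ℝ))))) :
    (∃ C c : ℝ, 0 < C ∧ 0 < c ∧
        ∀ r ≥ C, u r ≤ 2 * (4 - (d : ℝ)) / r ^ 2 + c * r ^ (-p)) ∧
      (∃ K : ℝ, 2 < K ∧ ∀ r ≥ K, u r ≤ 3 * (4 - (d : ℝ)) * r ^ (-(2 : ℝ))) := by
  set D : ℝ := (d : ℝ) with hD
  set A : ℝ := 2 * (4 - D) with hA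
  clear_value D A
  have hD1 : 1 ≤ D := by rcases hd with h | h | h <;> simp [hD, h] <;> norm_num
  have hD3 : D ≤ 3 := by rcases hd with h | h | h <;> simp [hD, h] <;> norm_num
  have hApos : 0 < A := by simp [hA]; linarith
  have hppos : 0 < p ∧ p * (p + 2 - D) = 2 * A := by
    rcases hp with ⟨h1, h2⟩ | ⟨h1, h2⟩ | ⟨h1, h2⟩
    · subst h2; constructor
      · norm_num
      · simp [hA, hD, h1]; norm_num
    · have hs : Real.sqrt 2 ^ 2 = 2 := Real.sq_sqrt (by norm_num)
      have hs0 : 0 < Real.sqrt 2 := Real.sqrt_pos.2 (by norm_num)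
      subst h2; constructor
      · positivity
      · simp only [hA, hD, h1]; push_cast; nlinarith [hs]
    · have hs : Real.sqrt 17 ^ 2 = 17 := Real.sq_sqrt (by norm_num)
      have hs0 : 0 < Real.sqrt 17 := Real.sqrt_pos.2 (by norm_num)
      subst h2; constructor
      · positivity
      · simp only [hA, hD, h1]; push_cast; nlinarith [hs]
  obtain ⟨hp0, hpid⟩ := hppos
  -- u tends to 0
  have hu0 : Tendsto u atTop (nhds 0) := by
    have hinv : Tendsto (fun r : ℝ => (r ^ 2)⁻¹) atTop (nhds 0) := by
      apply Tendsto.inv_tendsto_atTop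
      exact tendsto_pow_atTop (by norm_num)
    have := hlim.mul hinv
    rw [mul_zero] at this
    apply this.congr'
    filter_upwards [eventually_ge_atTop (1 : ℝ)] with r hr
    have hr0 : (r : ℝ) ^ 2 ≠ 0 := by positivity
    field_simp
  have hTp : Tendsto (fun r : ℝ => r ^ (-p)) atTop (nhds 0) := tendsto_rpow_neg_atTop hp0
  have hT2 : Tendsto (fun r : ℝ => r ^ (-(2:ℝ))) atTop (nhds 0) :=
    tendsto_rpow_neg_atTop (by norm_num)
  -- choose c
  set c : ℝ := max ((u 2 - A * (2:ℝ) ^ (-(2:ℝ))) * (2:ℝ) ^ p) 0 + 1 with hcdef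
  clear_value c
  have hcpos : 0 < c := by
    have := le_max_right ((u 2 - A * (2:ℝ) ^ (-(2:ℝ))) * (2:ℝ) ^ p) 0
    simp only [hcdef]; linarith
  -- the barrier function
  set w : ℝ → ℝ := fun x => u x - A * x ^ (-(2:ℝ)) - c * x ^ (-p) with hwdef
  clear_value w
  have hw2 : w 2 ≤ 0 := by
    have h2p : (0:ℝ) < (2:ℝ) ^ (-p) := rpow_pos_of_pos (by norm_num) _
    have hst : (2:ℝ) ^ p * (2:ℝ) ^ (-p) = 1 := by
      rw [← rpow_add (by norm_num : (0:ℝ) < 2)]; simp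
    have hcge : (u 2 - A * (2:ℝ) ^ (-(2:ℝ))) * (2:ℝ) ^ p ≤ c := by
      have := le_max_left ((u 2 - A * (2:ℝ) ^ (-(2:ℝ))) * (2:ℝ) ^ p) 0
      simp only [hcdef]; linarith
    have h9 := mul_le_mul_of_nonneg_right hcge h2p.le
    have h10 : u 2 - A * (2:ℝ) ^ (-(2:ℝ))
        = ((u 2 - A * (2:ℝ) ^ (-(2:ℝ))) * (2:ℝ) ^ p) * (2:ℝ) ^ (-p) := by
      conv_rhs => rw [mul_assoc, hst, mul_one]
    simp only [hwdef]
    linarith [h9, h10.le]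
  -- derivative formulas
  have hwderiv : ∀ x > (1:ℝ), HasDerivAt w
      (deriv u x - A * (-(2:ℝ) * x ^ (-(2:ℝ) - 1)) - c * (-p * x ^ (-p - 1))) x := by
    intro x hx
    have hx0 : (0:ℝ) < x := by linarith
    rw [hwdef]
    exact (((hdiff x hx).hasDerivAt.sub
      ((hasDerivAt_rpow' (-(2:ℝ)) hx0).const_mul A)).sub
      ((hasDerivAt_rpow' (-p) hx0).const_mul c))
  set g : ℝ → ℝ := fun x =>
    deriv u x - A * (-(2:ℝ) * x ^ (-(2:ℝ) - 1)) - c * (-p * x ^ (-p - 1)) with hgdef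
  clear_value g
  have hderivw : ∀ x > (1:ℝ), deriv w x = g x := by
    intro x hx
    rw [hgdef]
    exact (hwderiv x hx).deriv
  have hgderiv : ∀ x > (1:ℝ), HasDerivAt g
      (deriv (deriv u) x - A * (-(2:ℝ) * ((-(2:ℝ) - 1) * x ^ (-(2:ℝ) - 1 - 1)))
        - c * (-p * ((-p - 1) * x ^ (-p - 1 - 1)))) x := by
    intro x hx
    have hx0 : (0:ℝ) < x := by linarith
    rw [hgdef]
    exact (((hdiff' x hx).hasDerivAt.sub
      (((hasDerivAt_rpow' (-(2:ℝ) - 1) hx0).const_mul (-(2:ℝ))).const_mul A)).sub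
      (((hasDerivAt_rpow' (-p - 1) hx0).const_mul (-p)).const_mul c))
  -- the key maximum-principle bound
  have hkey : ∀ r ≥ (2:ℝ), w r ≤ 0 := by
    by_contra hcon
    push_neg at hcon
    obtain ⟨r₁, hr₁2, hr₁pos⟩ := hcon
    have hw0 : Tendsto w atTop (nhds 0) := by
      have := (hu0.sub (hT2.const_mul A)).sub (hTp.const_mul c)
      simpa [hwdef] using this
    have hev : ∀ᶠ r in atTop, w r < w r₁ / 2 :=
      hw0.eventually (eventually_lt_nhds (half_pos hr₁pos))
    obtain ⟨R₀, hR₀⟩ := eventually_atTop.mp hev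
    set R : ℝ := max R₀ (r₁ + 1) with hRdef
    clear_value R
    have hr₁R : r₁ < R := by
      rw [hRdef]; exact lt_of_lt_of_le (by linarith) (le_max_right _ _)
    have hR2 : (2:ℝ) ≤ R := by
      rw [hRdef]; exact le_trans (by linarith) (le_max_right _ _)
    have hcont : ContinuousOn w (Set.Icc 2 R) := by
      intro x hx
      exact ((hwderiv x (by linarith [hx.1])).differentiableAt).continuousAt.continuousWithinAt
    obtain ⟨r₀, hr₀mem, hr₀max⟩ :=
      isCompact_Icc.exists_isMaxOn (Set.nonempty_Icc.2 hR2) hcont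
    have hMr₀ : w r₁ ≤ w r₀ := hr₀max ⟨hr₁2, hr₁R.le⟩
    have hr₀2 : 2 < r₀ := by
      rcases lt_or_eq_of_le hr₀mem.1 with h | h
      · exact h
      · exfalso; rw [← h] at hMr₀; linarith
    have hr₀R : r₀ < R := by
      rcases lt_or_eq_of_le hr₀mem.2 with h | h
      · exact h
      · exfalso
        have h11 := hR₀ R (hRdef ▸ le_max_left _ _)
        rw [h] at hMr₀; linarith
    have hlocmax : IsLocalMax w r₀ := hr₀max.isLocalMax (Icc_mem_nhds hr₀2 hr₀R)
    have hr₀1 : (1:ℝ) < r₀ := by linarith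
    have hr₀0 : (0:ℝ) < r₀ := by linarith
    have hd1 : deriv w r₀ = 0 := hlocmax.deriv_eq_zero
    have hevd : deriv w =ᶠ[nhds r₀] g := by
      filter_upwards [Ioi_mem_nhds hr₀1] with x hx
      exact hderivw x hx
    have hd2 : deriv (deriv w) r₀ ≤ 0 := by
      apply secondDeriv_nonpos_of_isLocalMax hlocmax
      · filter_upwards [Ioi_mem_nhds hr₀1] with x hx
        exact (hwderiv x hx).differentiableAt
      · exact hevd.differentiableAt_iff.mpr (hgderiv r₀ hr₀1).differentiableAt
    have hd2' : deriv (deriv w) r₀ = deriv g r₀ := hevd.deriv_eq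
    have hgval := (hgderiv r₀ hr₀1).deriv
    -- arithmetic at the maximum point
    set I : ℝ := r₀⁻¹ with hIdef
    set T : ℝ := r₀ ^ (-p) with hTdef
    clear_value I T
    have hI : 0 < I := by rw [hIdef]; exact inv_pos.2 hr₀0
    have hT : 0 < T := by rw [hTdef]; exact rpow_pos_of_pos hr₀0 _

    have e1 : r₀ ^ (-p - 1) = T * I := by
      rw [hTdef, hIdef, show -p - 1 = -p + (-1) by ring, rpow_add hr₀0, rpow_neg_one]
    have e0 : r₀ ^ (-(2:ℝ)) = I * I := by
      rw [hIdef, show -(2:ℝ) = (-1) + (-1) by norm_num, rpow_add hr₀0, rpow_neg_one]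
    have e2 : r₀ ^ (-(2:ℝ) - 1) = I * I * I := by
      rw [show -(2:ℝ) - 1 = -(2:ℝ) + (-1) by ring, rpow_add hr₀0, rpow_neg_one, e0, ← hIdef]
    have e3 : r₀ ^ (-(2:ℝ) - 1 - 1) = I * I * I * I := by
      rw [show -(2:ℝ) - 1 - 1 = (-(2:ℝ) - 1) + (-1) by ring, rpow_add hr₀0, rpow_neg_one, e2, ← hIdef]
    have e4 : r₀ ^ (-p - 1 - 1) = T * I * I := by
      rw [show -p - 1 - 1 = (-p - 1) + (-1) by ring, rpow_add hr₀0, rpow_neg_one, e1, ← hIdef]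
    have F1 : deriv u r₀ - A * (-2 * (I * I * I)) - c * (-p * (T * I)) = 0 := by
      have h := hderivw r₀ hr₀1
      rw [hd1] at h
      simp only [hgdef, e2, e1] at h
      linarith [h]
    have F2 : deriv (deriv u) r₀ - A * (-2 * ((-(2:ℝ) - 1) * (I * I * I * I)))
        - c * (-p * ((-p - 1) * (T * I * I))) ≤ 0 := by
      rw [hd2', hgval] at hd2
      rw [e3, e4] at hd2
      exact hd2
    have F3 : deriv (deriv u) r₀ + (D - 1) * I * deriv u r₀ = (u r₀) ^ 2 := by
      have h := heq r₀ hr₀1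
      rwa [div_eq_mul_inv, ← hIdef] at h
    have F4 : A * (I * I) ≤ u r₀ := by
      have h := hlb r₀ hr₀1
      have hx2 : A * (I * I) = A / r₀ ^ 2 := by
        rw [hIdef, ← mul_inv, ← sq, div_eq_mul_inv]
      linarith [h, hx2.le, hx2.ge]
    have F5 : 0 < u r₀ - A * (I * I) - c * T := by
      have h12 : 0 < w r₀ := lt_of_lt_of_le hr₁pos hMr₀
      simp only [hwdef, e0, ← hTdef] at h12
      linarith [h12]
    have hA8 : A = 8 - 2 * D := by rw [hA]; ring
    exact arith_contra D A p c (u r₀) (deriv u r₀) (deriv (deriv u) r₀) I T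
      hD1 hApos hA8 hpid hcpos hI hT F1 F2 F3 F4 F5
  constructor
  · refine ⟨2, c, by norm_num, hcpos, fun r hr => ?_⟩
    have hr0 : (0:ℝ) < r := by linarith
    have hw := hkey r hr
    simp only [hwdef] at hw
    have e0 : r ^ (-(2:ℝ)) = (r ^ 2)⁻¹ := by
      rw [show (-(2:ℝ)) = -((2:ℕ):ℝ) by norm_num, rpow_neg hr0.le, rpow_natCast]
    rw [e0] at hw
    have e5 : A * (r ^ 2)⁻¹ = A / r ^ 2 := (div_eq_mul_inv A _).symm
    linarith [hw, e5.le, e5.ge]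
  · -- part (ii)
    have hev : ∀ᶠ r in atTop, r ^ 2 * u r < 3 * (4 - D) :=
      hlim.eventually (eventually_lt_nhds (by linarith))
    obtain ⟨R, hR⟩ := eventually_atTop.mp hev
    refine ⟨max R 3, lt_of_lt_of_le (by norm_num) (le_max_right _ _), fun r hr => ?_⟩
    have hr3 : (3:ℝ) ≤ r := le_trans (le_max_right _ _) hr
    have hrR : R ≤ r := le_trans (le_max_left _ _) hr
    have hr0 : (0:ℝ) < r := by linarith
    have h1 := hR r hrR
    have e0 : r ^ (-(2:ℝ)) = (r ^ 2)⁻¹ := by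
      rw [show (-(2:ℝ)) = -((2:ℕ):ℝ) by norm_num, rpow_neg hr0.le, rpow_natCast]
    have hr2 : (0:ℝ) < r ^ 2 := by positivity
    rw [e0, ← div_eq_mul_inv, le_div_iff₀ hr2]
    linarith [h1]
end

section
/- Let β > 0 and λ = 1/2 − √(1/4 + 2β). If z : [1,∞) → ℝ is continuous, nonnegative, twice differentiable on (1,∞), satisfies (1/2)·z''(t) − (1/2)·z'(t) − β·z(t)·(z(t)+1) = 0 for all t > 1, and z(t) → 0 as t → ∞, then z(t) ≤ z(1)·exp(λ·(t−1)) for all t ≥ 1; in particular z decreases to zero exponentially fast. -/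
/-!
Set `P = z' - λ z`. Because `λ² - λ = 2β`, the equation becomes `P' = (1 - λ) P + 2β z²`,
so `P' ≥ (1 - λ) P` with `1 - λ ≥ 0`. If `P` were positive somewhere it would stay at least
some `c > 0` from then on, forcing `z' ≥ c/2` eventually (as `λ z → 0`), contradicting
`z → 0`. Hence `z' ≤ λ z`, and Grönwall's inequality gives `z t ≤ z 1 · exp (λ (t - 1))`.
-/

open Real Filter Set

theorem le_mul_exp_of_deriv_le {f f' : ℝ → ℝ} {a μ : ℝ} (hf : ContinuousOn f (Ici a))
    (hf' : ∀ t > a, HasDerivAt f (f' t) t) (hle : ∀ t > a, f' t ≤ μ * f t) :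
    ∀ t ≥ a, f t ≤ f a * exp (μ * (t - a)) := by
  have hanti : AntitoneOn (fun t => exp (-μ * (t - a)) * f t) (Ici a) := by
    refine antitoneOn_of_hasDerivWithinAt_nonpos
      (f' := fun t => exp (-μ * (t - a)) * (f' t - μ * f t)) (convex_Ici a) (((continuous_exp.comp (by fun_prop)).continuousOn).mul hf)
      (fun t ht => ?_) fun t ht => ?_
    · rw [interior_Ici] at ht
      have hexp : HasDerivAt (fun t => exp (-μ * (t - a))) (exp (-μ * (t - a)) * -μ) t := by
        simpa using ((hasDerivAt_id t).sub_const a).const_mul (-μ) |>.exp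
      exact ((hexp.mul (hf' t ht)).congr_deriv (by ring)).hasDerivWithinAt
    · rw [interior_Ici] at ht
      exact mul_nonpos_of_nonneg_of_nonpos (exp_pos _).le (sub_nonpos.mpr (hle t ht))
  intro t ht
  have h := hanti self_mem_Ici ht ht
  simp only [sub_self, mul_zero, exp_zero, one_mul] at h
  calc f t = exp (μ * (t - a)) * (exp (-μ * (t - a)) * f t) := by
        rw [← mul_assoc, ← exp_add, show μ * (t - a) + -μ * (t - a) = 0 by ring, exp_zero,
          one_mul]
    _ ≤ exp (μ * (t - a)) * f a := by gcongr
    _ = f a * exp (μ * (t - a)) := mul_comm _ _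

theorem mul_exp_le_of_le_deriv {f f' : ℝ → ℝ} {a μ : ℝ} (hf : ContinuousOn f (Ici a))
    (hf' : ∀ t > a, HasDerivAt f (f' t) t) (hle : ∀ t > a, μ * f t ≤ f' t) :
    ∀ t ≥ a, f a * exp (μ * (t - a)) ≤ f t := by
  intro t ht
  simpa using le_mul_exp_of_deriv_le hf.neg (fun t ht => (hf' t ht).neg)
    (fun t ht => by simpa using hle t ht) t ht

theorem tendsto_atTop_of_eventually_le_deriv {f : ℝ → ℝ} {c : ℝ} (hc : 0 < c)
    (hf : ∀ᶠ t in atTop, DifferentiableAt ℝ f t) (hle : ∀ᶠ t in atTop, c ≤ deriv f t) :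
    Tendsto f atTop atTop := by
  obtain ⟨a, ha⟩ := eventually_atTop.mp (hf.and hle)
  have hgrowth : ∀ t ≥ a, c * (t - a) ≤ f t - f a :=
    fun t ht => (convex_Ici a).mul_sub_le_image_sub_of_le_deriv
      (fun s hs => (ha s hs).1.continuousAt.continuousWithinAt)
      (fun s hs => (ha s (interior_subset hs)).1.differentiableWithinAt)
      (fun s hs => (ha s (interior_subset hs)).2) a self_mem_Ici t ht ht
  refine tendsto_atTop_mono' atTop (eventually_atTop.mpr ⟨a, fun t ht => ?_⟩)
    (tendsto_atTop_add_const_left atTop (f a)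
      ((tendsto_atTop_add_const_right atTop (-a) tendsto_id).const_mul_atTop hc))
  simp only [id]
  linarith [hgrowth t ht]

section RiccatiComparison

variable {β lam a : ℝ} {z : ℝ → ℝ}

theorem hasDerivAt_deriv_sub_mul_self (hroot : lam ^ 2 - lam = 2 * β) {t : ℝ}
    (hz : DifferentiableAt ℝ z t) (hz' : DifferentiableAt ℝ (deriv z) t)
    (heq : (1 / 2) * deriv (deriv z) t - (1 / 2) * deriv z t - β * z t * (z t + 1) = 0) :
    HasDerivAt (fun s => deriv z s - lam * z s)
      ((1 - lam) * (deriv z t - lam * z t) + 2 * β * z t ^ 2) t :=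
  (hz'.hasDerivAt.sub (hz.hasDerivAt.const_mul lam)).congr_deriv
    (by linear_combination 2 * heq - z t * hroot)

theorem deriv_le_mul_self_of_tendsto_zero (hβ : 0 ≤ β) (hroot : lam ^ 2 - lam = 2 * β)
    (hlam : lam ≤ 1)
    (hdiff : ∀ t > a, DifferentiableAt ℝ z t)
    (hdiff' : ∀ t > a, DifferentiableAt ℝ (deriv z) t)
    (heq : ∀ t > a,
      (1 / 2) * deriv (deriv z) t - (1 / 2) * deriv z t - β * z t * (z t + 1) = 0)
    (hlim : Tendsto z atTop (nhds 0)) :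
    ∀ t > a, deriv z t ≤ lam * z t := by
  by_contra! ⟨t₀, ht₀, hpos⟩
  set c := deriv z t₀ - lam * z t₀
  have hc : 0 < c := sub_pos.mpr hpos
  have hP : ∀ t ≥ t₀, HasDerivAt (fun s => deriv z s - lam * z s)
      ((1 - lam) * (deriv z t - lam * z t) + 2 * β * z t ^ 2) t := fun t ht =>
    hasDerivAt_deriv_sub_mul_self hroot (hdiff t (ht₀.trans_le ht))
      (hdiff' t (ht₀.trans_le ht)) (heq t (ht₀.trans_le ht))
  have hP_ge : ∀ t ≥ t₀, c ≤ deriv z t - lam * z t := fun t ht =>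
    calc c ≤ c * exp ((1 - lam) * (t - t₀)) :=
          le_mul_of_one_le_right hc.le (one_le_exp (by nlinarith))
      _ ≤ deriv z t - lam * z t :=
          mul_exp_le_of_le_deriv (fun s hs => (hP s hs).continuousAt.continuousWithinAt)
            (fun s hs => hP s hs.le) (fun s _ => by nlinarith [sq_nonneg (z s)]) t ht
  have hderiv : ∀ᶠ t in atTop, c / 2 ≤ deriv z t := by
    have hsmall : ∀ᶠ t in atTop, -(c / 2) < lam * z t :=
      (hlim.const_mul lam).eventually (lt_mem_nhds (by simpa using hc))
    filter_upwards [eventually_ge_atTop t₀, hsmall] with t ht hsmall_t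
    linarith [hP_ge t ht]
  exact not_tendsto_nhds_of_tendsto_atTop
    (tendsto_atTop_of_eventually_le_deriv (half_pos hc)
      ((eventually_gt_atTop a).mono hdiff) hderiv) 0 hlim

end RiccatiComparison

theorem stmt3_general (β lam : ℝ) (hβ : 0 < β)
    (hlam : lam = 1 / 2 - Real.sqrt (1 / 4 + 2 * β))
    (z : ℝ → ℝ) (hcont : ContinuousOn z (Set.Ici 1))
    (hdiff : ∀ t > (1 : ℝ), DifferentiableAt ℝ z t)
    (hdiff' : ∀ t > (1 : ℝ), DifferentiableAt ℝ (deriv z) t)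
    (heq : ∀ t > (1 : ℝ),
      (1 / 2) * deriv (deriv z) t - (1 / 2) * deriv z t - β * z t * (z t + 1) = 0)
    (hlim : Tendsto z atTop (nhds 0)) :
    ∀ t ≥ (1 : ℝ), z t ≤ z 1 * Real.exp (lam * (t - 1)) := by
  have hsqrt : Real.sqrt (1 / 4 + 2 * β) ^ 2 = 1 / 4 + 2 * β := Real.sq_sqrt (by positivity)
  have hroot : lam ^ 2 - lam = 2 * β := by rw [hlam]; linear_combination hsqrt
  have hlam_le : lam ≤ 1 := by rw [hlam]; linarith [Real.sqrt_nonneg (1 / 4 + 2 * β)]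
  exact le_mul_exp_of_deriv_le hcont (fun t ht => (hdiff t ht).hasDerivAt)
    (deriv_le_mul_self_of_tendsto_zero hβ.le hroot hlam_le hdiff hdiff' heq hlim)

/-- Comparison of the nonlinear ODE `(1/2)z'' - (1/2)z' - βz(z+1) = 0` against the
linear one: exponential decay `z(t) ≤ z(1) exp(λ (t-1))`. -/
theorem stmt3 (β lam : ℝ) (hβ : 0 < β)
    (hlam : lam = 1 / 2 - Real.sqrt (1 / 4 + 2 * β))
    (z : ℝ → ℝ) (hcont : ContinuousOn z (Set.Ici 1))
    (hnonneg : ∀ t ≥ (1 : ℝ), 0 ≤ z t)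
    (hdiff : ∀ t > (1 : ℝ), DifferentiableAt ℝ z t)
    (hdiff' : ∀ t > (1 : ℝ), DifferentiableAt ℝ (deriv z) t)
    (heq : ∀ t > (1 : ℝ),
      (1 / 2) * deriv (deriv z) t - (1 / 2) * deriv z t - β * z t * (z t + 1) = 0)
    (hlim : Tendsto z atTop (nhds 0)) :
    ∀ t ≥ (1 : ℝ), z t ≤ z 1 * Real.exp (lam * (t - 1)) :=
  stmt3_general β lam hβ hlam z hcont hdiff hdiff' heq hlim
end

section
/- Let d ∈ {1,2,3}. Suppose u : (1,∞) → ℝ is nonnegative, twice differentiable, satisfies the radial equation u''(r) + ((d−1)/r)·u'(r) = u(r)² for all r > 1, u(r) → ∞ as r decreases to 1, and u(r) → 0 as r → ∞. Then u(r) ≥ 2(4−d)/r² for all r > 1. -/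
/-!
The very singular solution `V r = 2(4-d)/r²` solves the same radial equation as `u`. Hence
`w = V - u` is negative near `r = 1` (where `u` blows up) and tends to `0` at infinity, so if it
were positive somewhere it would attain a positive interior maximum `c`. There `w' c = 0`, so the
first-order terms of the two equations cancel and `w'' c = V c ² - u c ² > 0` because
`0 ≤ u c < V c`; this contradicts the second-derivative test.
-/

open Real Filter Set Topology

theorem not_isLocalMax_of_deriv_deriv_pos {f : ℝ → ℝ} {x₀ : ℝ}
    (hf : 0 < deriv (deriv f) x₀) (hc : ContinuousAt f x₀) : ¬IsLocalMax f x₀ := by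
  intro hmax
  have hmin := isLocalMin_of_deriv_deriv_pos hf hmax.deriv_eq_zero hc
  have hconst : f =ᶠ[𝓝 x₀] fun _ => f x₀ := by
    filter_upwards [hmin, hmax] with x hx₁ hx₂ using le_antisymm hx₂ hx₁
  rw [hconst.deriv.deriv_eq, deriv_const', deriv_const] at hf
  exact hf.false

theorem deriv_deriv_sub {f g : ℝ → ℝ} {x : ℝ}
    (hf : ∀ᶠ y in 𝓝 x, DifferentiableAt ℝ f y) (hg : ∀ᶠ y in 𝓝 x, DifferentiableAt ℝ g y)
    (hf' : DifferentiableAt ℝ (deriv f) x) (hg' : DifferentiableAt ℝ (deriv g) x) :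
    deriv (deriv (f - g)) x = deriv (deriv f) x - deriv (deriv g) x := by
  have hderiv : deriv (f - g) =ᶠ[𝓝 x] deriv f - deriv g := by
    filter_upwards [hf, hg] with y hfy hgy using deriv_sub hfy hgy
  rw [hderiv.deriv_eq, deriv_sub hf' hg']

theorem exists_isLocalMax_pos_of_tendsto {w : ℝ → ℝ} {a r : ℝ} (hr : a < r) (hwr : 0 < w r)
    (hcont : ContinuousOn w (Ioi a)) (hleft : ∀ᶠ x in 𝓝[>] a, w x ≤ 0)
    (hright : Tendsto w atTop (𝓝 0)) : ∃ c > a, 0 < w c ∧ IsLocalMax w c := by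
  obtain ⟨x, hxw, hax, hxr⟩ := (hleft.and (Ioo_mem_nhdsGT hr)).exists
  obtain ⟨y, hyw, hry⟩ :=
    ((hright.eventually (eventually_lt_nhds hwr)).and (eventually_gt_atTop r)).exists
  obtain ⟨c, hc, hcmax⟩ := isCompact_Icc.exists_isMaxOn (nonempty_Icc.2 (hxr.trans hry).le)
    (hcont.mono fun z hz => hax.trans_le hz.1)
  have hwc : w r ≤ w c := hcmax ⟨hxr.le, hry.le⟩
  have hxc : x < c := hc.1.lt_of_ne (by rintro rfl; linarith)
  have hcy : c < y := hc.2.lt_of_ne (by rintro rfl; linarith)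
  exact ⟨c, hax.trans hxc, hwr.trans_le hwc, hcmax.isLocalMax (Icc_mem_nhds hxc hcy)⟩

theorem nonpos_of_deriv_deriv_pos_at_critical {w : ℝ → ℝ} {a : ℝ}
    (hcont : ContinuousOn w (Ioi a)) (hleft : ∀ᶠ x in 𝓝[>] a, w x ≤ 0)
    (hright : Tendsto w atTop (𝓝 0))
    (hcrit : ∀ c > a, 0 < w c → deriv w c = 0 → 0 < deriv (deriv w) c) :
    ∀ r > a, w r ≤ 0 := by
  intro r hr
  by_contra! hwr
  obtain ⟨c, hac, hwc, hmax⟩ := exists_isLocalMax_pos_of_tendsto hr hwr hcont hleft hright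
  exact not_isLocalMax_of_deriv_deriv_pos (hcrit c hac hwc hmax.deriv_eq_zero)
    (hcont.continuousAt (Ioi_mem_nhds hac)) hmax

theorem deriv_deriv_sub_pos_of_critical {u v : ℝ → ℝ} {p c : ℝ}
    (hu : ∀ᶠ y in 𝓝 c, DifferentiableAt ℝ u y) (hv : ∀ᶠ y in 𝓝 c, DifferentiableAt ℝ v y)
    (hu' : DifferentiableAt ℝ (deriv u) c) (hv' : DifferentiableAt ℝ (deriv v) c)
    (hueq : deriv (deriv u) c + p * deriv u c = u c ^ 2)
    (hveq : deriv (deriv v) c + p * deriv v c = v c ^ 2)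
    (hu0 : 0 ≤ u c) (huv : u c < v c) (hcrit : deriv (v - u) c = 0) :
    0 < deriv (deriv (v - u)) c := by
  have hderiv_eq : deriv v c = deriv u c := by
    rw [deriv_sub hv.self_of_nhds hu.self_of_nhds, sub_eq_zero] at hcrit
    exact hcrit
  have hdiff_eq : deriv (deriv v) c - deriv (deriv u) c = (v c - u c) * (v c + u c) := by
    rw [hderiv_eq] at hveq
    linear_combination hveq - hueq
  rw [deriv_deriv_sub hv hu hv' hu', hdiff_eq]
  exact mul_pos (sub_pos.2 huv) (by linarith)

noncomputable def verySingular (d r : ℝ) : ℝ := 2 * (4 - d) / r ^ 2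

theorem hasDerivAt_verySingular (d : ℝ) {r : ℝ} (hr : r ≠ 0) :
    HasDerivAt (verySingular d) (-4 * (4 - d) / r ^ 3) r := by
  refine ((hasDerivAt_const r (2 * (4 - d))).fun_div (hasDerivAt_pow 2 r)
    (pow_ne_zero 2 hr)).congr_deriv ?_
  field_simp
  ring

theorem deriv_verySingular_eventuallyEq (d : ℝ) {r : ℝ} (hr : r ≠ 0) :
    deriv (verySingular d) =ᶠ[𝓝 r] fun x => -4 * (4 - d) / x ^ 3 := by
  filter_upwards [isOpen_ne.mem_nhds hr] with x hx using (hasDerivAt_verySingular d hx).deriv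

theorem hasDerivAt_deriv_verySingular (d : ℝ) {r : ℝ} (hr : r ≠ 0) :
    HasDerivAt (deriv (verySingular d)) (12 * (4 - d) / r ^ 4) r := by
  refine HasDerivAt.congr_of_eventuallyEq ?_ (deriv_verySingular_eventuallyEq d hr)
  refine ((hasDerivAt_const r (-4 * (4 - d))).fun_div (hasDerivAt_pow 3 r)
    (pow_ne_zero 3 hr)).congr_deriv ?_
  field_simp
  ring

theorem verySingular_radial_eq (d : ℝ) {r : ℝ} (hr : r ≠ 0) :
    deriv (deriv (verySingular d)) r + (d - 1) / r * deriv (verySingular d) r =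
      verySingular d r ^ 2 := by
  rw [(hasDerivAt_deriv_verySingular d hr).deriv, (hasDerivAt_verySingular d hr).deriv,
    verySingular]
  field_simp
  ring

theorem stmt6_general (d : ℕ)
    (u : ℝ → ℝ)
    (hnonneg : ∀ r > (1 : ℝ), 0 ≤ u r)
    (hdiff : ∀ r > (1 : ℝ), DifferentiableAt ℝ u r)
    (hdiff' : ∀ r > (1 : ℝ), DifferentiableAt ℝ (deriv u) r)
    (heq : ∀ r > (1 : ℝ), deriv (deriv u) r + ((d : ℝ) - 1) / r * deriv u r = (u r) ^ 2)
    (hblow : Tendsto u (nhdsWithin 1 (Set.Ioi 1)) atTop)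
    (hlim : Tendsto u atTop (nhds 0)) :
    ∀ r > (1 : ℝ), 2 * (4 - (d : ℝ)) / r ^ 2 ≤ u r := by
  set V := verySingular d
  have hV : ∀ {r : ℝ}, 0 < r → HasDerivAt V (-4 * (4 - d) / r ^ 3) r := fun hr =>
    hasDerivAt_verySingular d hr.ne'
  have hleft : Tendsto (V - u) (𝓝[>] 1) atBot := by
    rw [sub_eq_add_neg]
    exact ((hV one_pos).continuousAt.tendsto.mono_left
      nhdsWithin_le_nhds).add_atBot (tendsto_neg_atTop_atBot.comp hblow)
  have hright : Tendsto (V - u) atTop (𝓝 0) := by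
    rw [← sub_zero 0]
    exact (tendsto_const_nhds.div_atTop (tendsto_pow_atTop two_ne_zero)).sub hlim
  have hcrit : ∀ c > 1, 0 < (V - u) c → deriv (V - u) c = 0 → 0 < deriv (deriv (V - u)) c := by
    intro c hc hwc hw'
    have hnear : ∀ᶠ y in 𝓝 c, 1 < y := Ioi_mem_nhds hc
    exact deriv_deriv_sub_pos_of_critical (hnear.mono hdiff)
      (hnear.mono fun y hy => (hV (one_pos.trans hy)).differentiableAt) (hdiff' c hc)
      (hasDerivAt_deriv_verySingular d (by positivity)).differentiableAt (heq c hc)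
      (verySingular_radial_eq d (by positivity)) (hnonneg c hc) (sub_pos.1 hwc) hw'
  intro r hr
  have hcont : ContinuousOn (V - u) (Ioi 1) := fun x hx =>
    ((hV (one_pos.trans hx)).sub (hdiff x hx).hasDerivAt).continuousAt.continuousWithinAt
  exact sub_nonpos.1 <| nonpos_of_deriv_deriv_pos_at_critical hcont
    (hleft.eventually (eventually_le_atBot 0)) hright hcrit r hr

/-- Radial form of `V^∞ ≤ U^{∞,1}`: a nonnegative solution of the radial equation
blowing up at the unit sphere and vanishing at infinity dominates the very singular
solution `2(4-d)/r²`. -/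
theorem stmt6 (d : ℕ) (hd : d = 1 ∨ d = 2 ∨ d = 3)
    (u : ℝ → ℝ)
    (hnonneg : ∀ r > (1 : ℝ), 0 ≤ u r)
    (hdiff : ∀ r > (1 : ℝ), DifferentiableAt ℝ u r)
    (hdiff' : ∀ r > (1 : ℝ), DifferentiableAt ℝ (deriv u) r)
    (heq : ∀ r > (1 : ℝ), deriv (deriv u) r + ((d : ℝ) - 1) / r * deriv u r = (u r) ^ 2)
    (hblow : Tendsto u (nhdsWithin 1 (Set.Ioi 1)) atTop)
    (hlim : Tendsto u atTop (nhds 0)) :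
    ∀ r > (1 : ℝ), 2 * (4 - (d : ℝ)) / r ^ 2 ≤ u r :=
  stmt6_general d u hnonneg hdiff hdiff' heq hblow hlim
end

section
/- Let d ∈ {1,2,3}, p = p(d) (p(1) = 3, p(2) = 2√2, p(3) = (1+√17)/2), and a > 0. There exist constants R₀ > 2 and c > 0, depending only on d and a, with the following property: whenever u₁, u₂ : (1,∞) → ℝ are nonnegative, twice differentiable, both satisfy the radial equation w''(r) + ((d−1)/r)·w'(r) = w(r)² for all r > 1, u₂(r) ≤ u₁(r) for all r > 1, u₁(r) → 0 as r → ∞, and u₁(r) ≤ 2(4−d)/r² + a·r^{−p} for all r ≥ R₀, then for all R and r with R₀ ≤ R ≤ r, one has u₁(r) − u₂(r) ≥ c·(R/r)^p · (u₁(R) − u₂(R)). -/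
open Real Filter Topology Set

/-!
Let `D = u₁ - u₂ ≥ 0` and `b = 2 (4 - d) / r² + a r^(-p)`. Since `u₂ ≤ u₁ ≤ b`,
`ΔD = (u₁ + u₂) D ≤ 2 b D`. Because `p² - (d - 2) p = 4 (4 - d)`, the power `r^(-p)` solves
`Δφ = 4 (4 - d) φ / r²` exactly, and adding `C r^(2 - 2p)` with `C (p - 2)(3p - d) ≥ 4a` absorbs
the `a r^(-p)` part of `b`: once `C r^(2 - p) ≤ 1`, the barrier `V = A (r^(-p) + C r^(2 - 2p))`
satisfies `ΔV ≥ 2 b V`. With `A = D(R) R^p / 2` we get `V(R) ≤ D(R)`, and the maximum principle for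
`Δ - 2b` on `[R, ∞)` (using `D ≥ 0` and `V → 0` at infinity) gives `D ≥ V ≥ A r^(-p)`, i.e.
`D(r) ≥ ½ (R/r)^p D(R)`.
-/

theorem IsLocalMin.deriv_deriv_nonneg {f : ℝ → ℝ} {x : ℝ} (h : IsLocalMin f x)
    (hc : ContinuousAt f x) : 0 ≤ deriv (deriv f) x := by
  by_contra! hneg
  have hmax := isLocalMax_of_deriv_deriv_neg hneg h.deriv_eq_zero hc
  have hconst : f =ᶠ[𝓝 x] fun _ => f x := by
    filter_upwards [h, hmax] with y hmin hmax using le_antisymm hmax hmin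
  have hderiv : deriv f =ᶠ[𝓝 x] fun _ => 0 := by
    filter_upwards [hconst.eventuallyEq_nhds] with y hy
    rw [hy.deriv_eq, deriv_const]
  rw [hderiv.deriv_eq, deriv_const] at hneg
  exact lt_irrefl _ hneg

theorem nonneg_of_isLocalMin_nonneg {w : ℝ → ℝ} {R : ℝ} (hw : ContinuousOn w (Ici R))
    (hR : 0 ≤ w R) (htop : ∀ m < 0, ∀ᶠ x in atTop, m < w x)
    (hmin : ∀ z > R, IsLocalMin w z → 0 ≤ w z) : ∀ x ≥ R, 0 ≤ w x := by
  by_contra! ⟨x₀, hx₀R, hx₀⟩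
  obtain ⟨T, hx₀T, hwT⟩ := ((eventually_ge_atTop x₀).and (htop _ hx₀)).exists
  obtain ⟨z, ⟨hRz, hzT⟩, hzmin⟩ := isCompact_Icc.exists_isMinOn
    (nonempty_Icc.2 (hx₀R.trans hx₀T)) (hw.mono Icc_subset_Ici_self)
  have hzx₀ : w z ≤ w x₀ := hzmin ⟨hx₀R, hx₀T⟩
  have hRz' : R < z := hRz.lt_of_ne (by rintro rfl; linarith)
  have hzT' : z < T := hzT.lt_of_ne (by rintro rfl; linarith)
  linarith [hmin z hRz' (hzmin.isLocalMin (Icc_mem_nhds hRz' hzT'))]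

noncomputable def radialLaplacian (n : ℝ) (f : ℝ → ℝ) (x : ℝ) : ℝ :=
  deriv (deriv f) x + (n - 1) / x * deriv f x

section Sub

variable {f g : ℝ → ℝ} {x : ℝ}

theorem deriv_sub_eventuallyEq (hf : ∀ᶠ y in 𝓝 x, DifferentiableAt ℝ f y)
    (hg : ∀ᶠ y in 𝓝 x, DifferentiableAt ℝ g y) : deriv (f - g) =ᶠ[𝓝 x] deriv f - deriv g := by
  filter_upwards [hf, hg] with y hfy hgy using deriv_sub hfy hgy

theorem differentiableAt_deriv_sub (hf : ∀ᶠ y in 𝓝 x, DifferentiableAt ℝ f y)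
    (hg : ∀ᶠ y in 𝓝 x, DifferentiableAt ℝ g y) (hf' : DifferentiableAt ℝ (deriv f) x)
    (hg' : DifferentiableAt ℝ (deriv g) x) : DifferentiableAt ℝ (deriv (f - g)) x :=
  (hf'.sub hg').congr_of_eventuallyEq (deriv_sub_eventuallyEq hf hg)

theorem radialLaplacian_sub (n : ℝ) (hf : ∀ᶠ y in 𝓝 x, DifferentiableAt ℝ f y)
    (hg : ∀ᶠ y in 𝓝 x, DifferentiableAt ℝ g y) (hf' : DifferentiableAt ℝ (deriv f) x)
    (hg' : DifferentiableAt ℝ (deriv g) x) :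
    radialLaplacian n (f - g) x = radialLaplacian n f x - radialLaplacian n g x := by
  simp only [radialLaplacian]
  rw [(deriv_sub_eventuallyEq hf hg).deriv_eq, deriv_sub hf' hg',
    deriv_sub hf.self_of_nhds hg.self_of_nhds]
  ring

end Sub

theorem le_of_radialLaplacian_le {n R : ℝ} {q D V : ℝ → ℝ}
    (hD : ∀ x ≥ R, DifferentiableAt ℝ D x) (hD' : ∀ x > R, DifferentiableAt ℝ (deriv D) x)
    (hV : ∀ x ≥ R, DifferentiableAt ℝ V x) (hV' : ∀ x > R, DifferentiableAt ℝ (deriv V) x)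
    (hq : ∀ x > R, 0 < q x) (hDq : ∀ x > R, radialLaplacian n D x ≤ q x * D x)
    (hVq : ∀ x > R, q x * V x ≤ radialLaplacian n V x)
    (hD0 : ∀ x ≥ R, 0 ≤ D x) (hV0 : Tendsto V atTop (𝓝 0)) (hR : V R ≤ D R) :
    ∀ x ≥ R, V x ≤ D x := by
  have near {F : ℝ → ℝ} (hF : ∀ x ≥ R, DifferentiableAt ℝ F x) (z : ℝ) (hz : R < z) :
      ∀ᶠ y in 𝓝 z, DifferentiableAt ℝ F y :=
    (eventually_gt_nhds hz).mono fun y hy => hF y hy.le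
  have hcont : ContinuousOn (D - V) (Ici R) := fun x hx =>
    ((hD x hx).sub (hV x hx)).continuousAt.continuousWithinAt
  have htop : ∀ m < 0, ∀ᶠ x in atTop, m < (D - V) x := fun m hm => by
    filter_upwards [hV0.eventually (gt_mem_nhds (neg_pos.2 hm)), eventually_ge_atTop R]
      with x hVx hx
    linarith [hD0 x hx, show (D - V) x = D x - V x from rfl]
  refine fun x hx => sub_nonneg.1 (nonneg_of_isLocalMin_nonneg hcont (sub_nonneg.2 hR) htop
    (fun z hz hmin => ?_) x hx)
  by_contra! hneg
  have hlap : 0 ≤ radialLaplacian n (D - V) z := by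
    rw [radialLaplacian, hmin.deriv_eq_zero, mul_zero, add_zero]
    exact hmin.deriv_deriv_nonneg ((hD z hz.le).sub (hV z hz.le)).continuousAt
  rw [radialLaplacian_sub n (near hD z hz) (near hV z hz) (hD' z hz) (hV' z hz)] at hlap
  have hqw : q z * (D z - V z) < 0 := mul_neg_of_pos_of_neg (hq z hz) hneg
  linarith [hDq z hz, hVq z hz, mul_sub (q z) (D z) (V z)]

theorem radialLaplacian_sub_le_of_sq {n x b : ℝ} {u₁ u₂ : ℝ → ℝ}
    (hu₁ : ∀ᶠ y in 𝓝 x, DifferentiableAt ℝ u₁ y) (hu₂ : ∀ᶠ y in 𝓝 x, DifferentiableAt ℝ u₂ y)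
    (hu₁' : DifferentiableAt ℝ (deriv u₁) x) (hu₂' : DifferentiableAt ℝ (deriv u₂) x)
    (heq₁ : radialLaplacian n u₁ x = u₁ x ^ 2) (heq₂ : radialLaplacian n u₂ x = u₂ x ^ 2)
    (h₂₁ : u₂ x ≤ u₁ x) (h₁b : u₁ x ≤ b) :
    radialLaplacian n (u₁ - u₂) x ≤ 2 * b * (u₁ - u₂) x := by
  rw [radialLaplacian_sub n hu₁ hu₂ hu₁' hu₂', heq₁, heq₂, Pi.sub_apply]
  nlinarith [mul_le_mul_of_nonneg_right (show u₁ x + u₂ x ≤ 2 * b by linarith)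
    (sub_nonneg.2 h₂₁)]

section PowerPair

variable {α β k l x : ℝ}

theorem hasDerivAt_rpow_pair (hx : 0 < x) :
    HasDerivAt (fun y => α * y ^ k + β * y ^ l)
      (α * (k * x ^ (k - 1)) + β * (l * x ^ (l - 1))) x :=
  ((hasDerivAt_rpow_const (Or.inl hx.ne')).const_mul α).add
    ((hasDerivAt_rpow_const (Or.inl hx.ne')).const_mul β)

theorem hasDerivAt_deriv_rpow_pair (hx : 0 < x) :
    HasDerivAt (deriv fun y => α * y ^ k + β * y ^ l)
      (α * (k * ((k - 1) * x ^ (k - 1 - 1))) + β * (l * ((l - 1) * x ^ (l - 1 - 1)))) x := by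
  refine ((((hasDerivAt_rpow_const (Or.inl hx.ne')).const_mul k).const_mul α).add
    (((hasDerivAt_rpow_const (Or.inl hx.ne')).const_mul l).const_mul β)).congr_of_eventuallyEq ?_
  filter_upwards [eventually_gt_nhds hx] with y hy using (hasDerivAt_rpow_pair hy).deriv

theorem radialLaplacian_rpow_pair (n : ℝ) (hx : 0 < x) :
    radialLaplacian n (fun y => α * y ^ k + β * y ^ l) x =
      α * k * (k + n - 2) * x ^ (k - 2) + β * l * (l + n - 2) * x ^ (l - 2) := by
  have hpred (m : ℝ) : x ^ (m - 1) = x ^ (m - 2) * x := by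
    rw [← rpow_add_one hx.ne']; ring_nf
  rw [radialLaplacian, (hasDerivAt_deriv_rpow_pair hx).deriv, (hasDerivAt_rpow_pair hx).deriv,
    sub_sub, sub_sub, one_add_one_eq_two, hpred k, hpred l]
  field_simp
  ring

theorem tendsto_rpow_pair_atTop (hk : k < 0) (hl : l < 0) :
    Tendsto (fun y => α * y ^ k + β * y ^ l) atTop (𝓝 0) := by
  have hpow {m : ℝ} (hm : m < 0) : Tendsto (fun y : ℝ => y ^ m) atTop (𝓝 0) := by
    simpa using tendsto_rpow_neg_atTop (neg_pos.2 hm)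
  simpa using ((hpow hk).const_mul α).add ((hpow hl).const_mul β)

end PowerPair

theorem barrier_le_radialLaplacian {n p a A C x : ℝ} (hx : 0 < x)
    (hrel : p ^ 2 - (n - 2) * p = 4 * (4 - n)) (ha : 0 ≤ a) (hA : 0 ≤ A)
    (hCa : 4 * a ≤ C * ((p - 2) * (3 * p - n))) (hCx : C * x ^ (2 - p) ≤ 1) :
    2 * (2 * (4 - n) / x ^ 2 + a * x ^ (-p)) * (A * x ^ (-p) + A * C * x ^ (2 - 2 * p)) ≤
      radialLaplacian n (fun y => A * y ^ (-p) + A * C * y ^ (2 - 2 * p)) x := by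
  rw [radialLaplacian_rpow_pair n hx]
  set X := x ^ (-p)
  have hX0 : 0 < X := rpow_pos_of_pos hx _
  have hmul (s t : ℝ) : x ^ (s + t) = x ^ s * x ^ t := rpow_add hx s t
  have e₁ : x ^ (2 - 2 * p) = X ^ 2 * x ^ 2 := by
    rw [show 2 - 2 * p = -p + -p + 2 by ring, hmul, hmul, rpow_two]; ring
  have e₂ : x ^ (-p - 2) = X / x ^ 2 := by
    rw [sub_eq_add_neg, hmul, rpow_neg hx.le (2 : ℝ), rpow_two, div_eq_mul_inv]
  have e₃ : x ^ (2 - 2 * p - 2) = X ^ 2 := by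
    rw [show 2 - 2 * p - 2 = -p + -p by ring, hmul]; ring
  have e₄ : x ^ (2 - p) = X * x ^ 2 := by
    rw [show 2 - p = -p + 2 by ring, hmul, rpow_two]
  rw [e₁, e₂, e₃]
  rw [e₄] at hCx
  -- by `hrel`, `x ^ (-p)` solves `Δφ = 4 (4 - n) φ / x ^ 2` exactly: only the `a`-terms survive
  have hdiff : A * -p * (-p + n - 2) * (X / x ^ 2)
      + A * C * (2 - 2 * p) * (2 - 2 * p + n - 2) * X ^ 2
      - 2 * (2 * (4 - n) / x ^ 2 + a * X) * (A * X + A * C * (X ^ 2 * x ^ 2)) =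
      A * X ^ 2 * (C * ((p - 2) * (3 * p - n)) - 4 * a + 2 * a * (1 - C * (X * x ^ 2))) := by
    field_simp
    linear_combination (A + A * C * X * x ^ 2) * hrel
  have hpos :
      0 ≤ A * X ^ 2 * (C * ((p - 2) * (3 * p - n)) - 4 * a + 2 * a * (1 - C * (X * x ^ 2))) :=
    mul_nonneg (by positivity) (by nlinarith)
  linarith

theorem mul_rpow_neg_le_one {C s x : ℝ} (hC : 0 ≤ C) (hs : 0 < s) (hx : C ^ s⁻¹ ≤ x) :
    C * x ^ (-s) ≤ 1 := by
  have hx0 : 0 ≤ x := (rpow_nonneg hC _).trans hx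
  rw [rpow_neg hx0, ← div_eq_mul_inv]
  exact div_le_one_of_le₀ ((rpow_inv_le_iff_of_pos hC hx0 hs).1 hx) (rpow_nonneg hx0 _)

theorem rpow_barrier_le_two_mul {p A C R : ℝ} (hR : 0 < R) (hA : 0 ≤ A)
    (hCR : C * R ^ (2 - p) ≤ 1) : A * R ^ (-p) + A * C * R ^ (2 - 2 * p) ≤ 2 * (A * R ^ (-p)) := by
  have hsplit : R ^ (2 - 2 * p) = R ^ (-p) * R ^ (2 - p) := by rw [← rpow_add hR]; ring_nf
  have : A * C * R ^ (2 - 2 * p) ≤ A * R ^ (-p) := by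
    rw [hsplit, mul_mul_mul_comm]
    exact mul_le_of_le_one_right (by positivity) hCR
  linarith

theorem le_sub_of_radialLaplacian_eq_sq {n p a C R₀ : ℝ} {u₁ u₂ : ℝ → ℝ} (hn : n ≤ 4)
    (hp : 1 < p) (hrel : p ^ 2 - (n - 2) * p = 4 * (4 - n)) (ha : 0 < a) (hC : 0 ≤ C)
    (hCa : 4 * a ≤ C * ((p - 2) * (3 * p - n))) (hR₀ : 1 < R₀)
    (hCR₀ : ∀ x ≥ R₀, C * x ^ (2 - p) ≤ 1)
    (hu₁ : ∀ x > 1, DifferentiableAt ℝ u₁ x) (hu₁' : ∀ x > 1, DifferentiableAt ℝ (deriv u₁) x)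
    (hu₂ : ∀ x > 1, DifferentiableAt ℝ u₂ x) (hu₂' : ∀ x > 1, DifferentiableAt ℝ (deriv u₂) x)
    (heq₁ : ∀ x > 1, radialLaplacian n u₁ x = u₁ x ^ 2)
    (heq₂ : ∀ x > 1, radialLaplacian n u₂ x = u₂ x ^ 2) (h₂₁ : ∀ x > 1, u₂ x ≤ u₁ x)
    (hbound : ∀ x ≥ R₀, u₁ x ≤ 2 * (4 - n) / x ^ 2 + a * x ^ (-p))
    {R r : ℝ} (hR : R₀ ≤ R) (hr : R ≤ r) :
    1 / 2 * (R / r) ^ p * (u₁ R - u₂ R) ≤ u₁ r - u₂ r := by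
  have hR1 : 1 < R := hR₀.trans_le hR
  have hR0 : 0 < R := one_pos.trans hR1
  have hr0 : 0 < r := hR0.trans_le hr
  have near {F : ℝ → ℝ} (hF : ∀ x > 1, DifferentiableAt ℝ F x) (x : ℝ) (hx : 1 < x) :
      ∀ᶠ y in 𝓝 x, DifferentiableAt ℝ F y :=
    (eventually_gt_nhds hx).mono hF
  set A := (u₁ R - u₂ R) * R ^ p / 2
  have hA : 0 ≤ A := by
    have := sub_nonneg.2 (h₂₁ R hR1)
    positivity
  set V := fun y => A * y ^ (-p) + A * C * y ^ (2 - 2 * p)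
  have hVR : V R ≤ u₁ R - u₂ R := by
    have hAR : 2 * (A * R ^ (-p)) = u₁ R - u₂ R := by
      rw [show 2 * (A * R ^ (-p)) = (u₁ R - u₂ R) * (R ^ p * R ^ (-p)) by simp only [A]; ring,
        ← rpow_add hR0, add_neg_cancel, rpow_zero, mul_one]
    exact hAR ▸ rpow_barrier_le_two_mul hR0 hA (hCR₀ R hR)
  have hVr : V r ≤ u₁ r - u₂ r := by
    refine le_of_radialLaplacian_le (n := n) (R := R)
      (q := fun x => 2 * (2 * (4 - n) / x ^ 2 + a * x ^ (-p)))
      (fun x hx => (hu₁ x (hR1.trans_le hx)).sub (hu₂ x (hR1.trans_le hx)))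
      (fun x hx => differentiableAt_deriv_sub (near hu₁ x (hR1.trans hx))
        (near hu₂ x (hR1.trans hx)) (hu₁' x (hR1.trans hx)) (hu₂' x (hR1.trans hx)))
      (fun x hx => (hasDerivAt_rpow_pair (hR0.trans_le hx)).differentiableAt)
      (fun x hx => (hasDerivAt_deriv_rpow_pair (hR0.trans hx)).differentiableAt)
      (fun x hx => ?_)
      (fun x hx => radialLaplacian_sub_le_of_sq (near hu₁ x (hR1.trans hx))
        (near hu₂ x (hR1.trans hx)) (hu₁' x (hR1.trans hx)) (hu₂' x (hR1.trans hx))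
        (heq₁ x (hR1.trans hx)) (heq₂ x (hR1.trans hx)) (h₂₁ x (hR1.trans hx))
        (hbound x (hR.trans hx.le)))
      (fun x hx => barrier_le_radialLaplacian (hR0.trans hx) hrel ha.le hA hCa
        (hCR₀ x (hR.trans hx.le)))
      (fun x hx => sub_nonneg.2 (h₂₁ x (hR1.trans_le hx)))
      (tendsto_rpow_pair_atTop (by linarith) (by linarith)) hVR r hr
    have hx0 : 0 < x := hR0.trans hx
    have : 0 ≤ 2 * (4 - n) / x ^ 2 := div_nonneg (by linarith) (by positivity)
    have : 0 < a * x ^ (-p) := mul_pos ha (rpow_pos_of_pos hx0 _)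
    positivity
  calc 1 / 2 * (R / r) ^ p * (u₁ R - u₂ R) = A * r ^ (-p) := by
        rw [div_rpow hR0.le hr0.le, rpow_neg hr0.le]; ring
    _ ≤ V r := le_add_of_nonneg_right (by positivity)
    _ ≤ u₁ r - u₂ r := hVr

theorem criticalExponent_spec {d : ℕ} {p : ℝ}
    (hp : (d = 1 ∧ p = 3) ∨ (d = 2 ∧ p = 2 * Real.sqrt 2) ∨
      (d = 3 ∧ p = (1 + Real.sqrt 17) / 2)) :
    p ^ 2 - ((d : ℝ) - 2) * p = 4 * (4 - d) ∧ 2 < p ∧ (d : ℝ) ≤ 3 := by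
  rcases hp with ⟨rfl, rfl⟩ | ⟨rfl, rfl⟩ | ⟨rfl, rfl⟩
  · norm_num
  · have h2 := sq_sqrt (show (0 : ℝ) ≤ 2 by norm_num)
    refine ⟨by push_cast; nlinarith, by nlinarith [sqrt_nonneg 2], by norm_num⟩
  · have h17 := sq_sqrt (show (0 : ℝ) ≤ 17 by norm_num)
    refine ⟨by push_cast; nlinarith, by nlinarith [sqrt_nonneg 17], by norm_num⟩

theorem stmt8_general (d : ℕ) (p : ℝ)
    (hp : (d = 1 ∧ p = 3) ∨ (d = 2 ∧ p = 2 * Real.sqrt 2) ∨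
      (d = 3 ∧ p = (1 + Real.sqrt 17) / 2))
    (a : ℝ) (ha : 0 < a) :
    ∃ R₀ c : ℝ, 2 < R₀ ∧ 0 < c ∧
      ∀ u₁ u₂ : ℝ → ℝ,
        (∀ r > (1 : ℝ), 0 ≤ u₁ r) → (∀ r > (1 : ℝ), 0 ≤ u₂ r) →
        (∀ r > (1 : ℝ), DifferentiableAt ℝ u₁ r) →
        (∀ r > (1 : ℝ), DifferentiableAt ℝ (deriv u₁) r) →
        (∀ r > (1 : ℝ), DifferentiableAt ℝ u₂ r) →
        (∀ r > (1 : ℝ), DifferentiableAt ℝ (deriv u₂) r) →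
        (∀ r > (1 : ℝ),
          deriv (deriv u₁) r + ((d : ℝ) - 1) / r * deriv u₁ r = (u₁ r) ^ 2) →
        (∀ r > (1 : ℝ),
          deriv (deriv u₂) r + ((d : ℝ) - 1) / r * deriv u₂ r = (u₂ r) ^ 2) →
        (∀ r > (1 : ℝ), u₂ r ≤ u₁ r) →
        Tendsto u₁ atTop (nhds 0) →
        (∀ r ≥ R₀, u₁ r ≤ 2 * (4 - (d : ℝ)) / r ^ 2 + a * r ^ (-p)) →
        ∀ R r : ℝ, R₀ ≤ R → R ≤ r →
          c * (R / r) ^ p * (u₁ R - u₂ R) ≤ u₁ r - u₂ r := by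
  obtain ⟨hrel, hp2, hd3⟩ := criticalExponent_spec hp
  have hδ : 0 < (p - 2) * (3 * p - d) := mul_pos (by linarith) (by linarith)
  set C := 4 * a / ((p - 2) * (3 * p - d))
  have hC : 0 ≤ C := by positivity
  have hCpow : 0 ≤ C ^ (p - 2)⁻¹ := rpow_nonneg hC _
  refine ⟨3 + C ^ (p - 2)⁻¹, 1 / 2, by linarith, one_half_pos, ?_⟩
  intro u₁ u₂ _ _ hu₁ hu₁' hu₂ hu₂' heq₁ heq₂ h₂₁ _ hbound R r hR hr
  have hCR₀ (x : ℝ) (hx : 3 + C ^ (p - 2)⁻¹ ≤ x) : C * x ^ (2 - p) ≤ 1 := by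
    rw [show 2 - p = -(p - 2) by ring]
    exact mul_rpow_neg_le_one hC (by linarith) (by linarith)
  exact le_sub_of_radialLaplacian_eq_sq (by linarith) (by linarith) hrel ha hC
    (div_mul_cancel₀ _ hδ.ne').ge (by linarith) hCR₀ hu₁ hu₁' hu₂ hu₂' heq₁ heq₂ h₂₁ hbound hR hr

/-- Proposition 4.3(c), radial form: matching lower bound
`u₁(r) - u₂(r) ≥ c (R/r)^p (u₁(R) - u₂(R))` for `R₀ ≤ R ≤ r`, with constants
`R₀ > 2` and `c > 0` depending only on `d` and `a`. -/
theorem stmt8 (d : ℕ) (hd : d = 1 ∨ d = 2 ∨ d = 3) (p : ℝ)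
    (hp : (d = 1 ∧ p = 3) ∨ (d = 2 ∧ p = 2 * Real.sqrt 2) ∨
      (d = 3 ∧ p = (1 + Real.sqrt 17) / 2))
    (a : ℝ) (ha : 0 < a) :
    ∃ R₀ c : ℝ, 2 < R₀ ∧ 0 < c ∧
      ∀ u₁ u₂ : ℝ → ℝ,
        (∀ r > (1 : ℝ), 0 ≤ u₁ r) → (∀ r > (1 : ℝ), 0 ≤ u₂ r) →
        (∀ r > (1 : ℝ), DifferentiableAt ℝ u₁ r) →
        (∀ r > (1 : ℝ), DifferentiableAt ℝ (deriv u₁) r) →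
        (∀ r > (1 : ℝ), DifferentiableAt ℝ u₂ r) →
        (∀ r > (1 : ℝ), DifferentiableAt ℝ (deriv u₂) r) →
        (∀ r > (1 : ℝ),
          deriv (deriv u₁) r + ((d : ℝ) - 1) / r * deriv u₁ r = (u₁ r) ^ 2) →
        (∀ r > (1 : ℝ),
          deriv (deriv u₂) r + ((d : ℝ) - 1) / r * deriv u₂ r = (u₂ r) ^ 2) →
        (∀ r > (1 : ℝ), u₂ r ≤ u₁ r) →
        Tendsto u₁ atTop (nhds 0) →
        (∀ r ≥ R₀, u₁ r ≤ 2 * (4 - (d : ℝ)) / r ^ 2 + a * r ^ (-p)) →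
        ∀ R r : ℝ, R₀ ≤ R → R ≤ r →
          c * (R / r) ^ p * (u₁ R - u₂ R) ≤ u₁ r - u₂ r :=
  stmt8_general d p hp a ha
end

section
/- Fix a dimension d ≥ 1 and R > 0. For every nonempty compact set K₀ ⊆ ℝ^d and every r > 0, the set {K ∈ 𝒦 : hausdorffEdist(K ∩ closedBall(0,R), K₀) < r} is a Borel subset of 𝒦. Since such sets generate the Borel σ-algebra on the hyperspace of compact subsets, this expresses the Borel measurability of the map K ↦ K ∩ closedBall(0,R) asserted in Lemma 2.1(a) of the paper. -/
/-!
Pick a countable dense subset `T ⊆ K₀`. For a set `A`, `hausdorffEDist A K₀ < ε` holds iff for some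
rational `q` with `q < ε`, `A` lies in the open `q`-thickening of `K₀` and every point of `T` is
within distance `q` of `A` (by closedness of `cthickening q A` the latter extends from `T` to `K₀`).
For `A = K ∩ B` with `K` compact and `B` closed, the first condition says that `K` avoids the closed
set `B \ thickening q K₀`, and by compactness the second says that `K` meets each closed set
`B ∩ closedBall y q`, `y ∈ T`. In the Vietoris topology these are an open and a closed condition,
so the set is a countable union of countable intersections of Borel sets.
-/

open TopologicalSpace Metric Set
open scoped ENNReal

theorem hausdorffEDist_lt_iff_exists_rat {X : Type*} [PseudoEMetricSpace X] {A K T : Set X}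
    (hTK : T ⊆ K) (hKT : K ⊆ closure T) {ε : ℝ≥0∞} :
    hausdorffEDist A K < ε ↔ ∃ q : ℚ, 0 ≤ q ∧ ENNReal.ofReal q < ε ∧
      A ⊆ thickening q K ∧ T ⊆ cthickening q A := by
  constructor
  · intro h
    obtain ⟨q, hq, hAq, hqε⟩ := ENNReal.lt_iff_exists_rat_btwn.1 h
    refine ⟨q, hq, hqε, fun x hx => (infEDist_le_hausdorffEDist_of_mem hx).trans_lt hAq,
      fun y hy => ?_⟩
    rw [hausdorffEDist_comm] at hAq
    exact (infEDist_le_hausdorffEDist_of_mem (hTK hy)).trans hAq.le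
  · rintro ⟨q, -, hqε, hA, hT⟩
    have hK : K ⊆ cthickening q A := hKT.trans (closure_minimal hT isClosed_cthickening)
    exact (hausdorffEDist_le_of_infEDist (fun x hx => (hA hx).le) hK).trans_lt hqε

theorem IsCompact.mem_cthickening_iff_inter_closedBall_nonempty {X : Type*}
    [PseudoMetricSpace X] {s : Set X} (hs : IsCompact s) {δ : ℝ} (hδ : 0 ≤ δ) {x : X} :
    x ∈ cthickening δ s ↔ (s ∩ closedBall x δ).Nonempty := by
  simp only [hs.cthickening_eq_biUnion_closedBall hδ, mem_iUnion₂, exists_prop,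
    mem_closedBall_comm (x := x), Set.Nonempty, mem_inter_iff]

theorem TopologicalSpace.NonemptyCompacts.measurableSet_setOf_hausdorffEDist_inter_lt {X : Type*}
    [PseudoMetricSpace X] [MeasurableSpace (NonemptyCompacts X)]
    [OpensMeasurableSpace (NonemptyCompacts X)] {B : Set X} (hB : IsClosed B) {K₀ : Set X}
    (hK₀ : IsSeparable K₀) (ε : ℝ≥0∞) :
    MeasurableSet {K : NonemptyCompacts X | hausdorffEDist ((K : Set X) ∩ B) K₀ < ε} := by
  obtain ⟨T, hTK, hTc, hKT⟩ := hK₀.exists_countable_dense_subset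
  have hsplit : {K : NonemptyCompacts X | hausdorffEDist ((K : Set X) ∩ B) K₀ < ε} =
      ⋃ (q : ℚ) (_ : 0 ≤ q ∧ ENNReal.ofReal q < ε),
        {K : NonemptyCompacts X | (K : Set X) ⊆ Bᶜ ∪ thickening q K₀} ∩
        ⋂ y ∈ T, {K : NonemptyCompacts X | ((K : Set X) ∩ (B ∩ closedBall y q)).Nonempty} := by
    ext K
    simp only [mem_ofPred_eq, hausdorffEDist_lt_iff_exists_rat hTK hKT, mem_iUnion,
      mem_inter_iff, mem_iInter, exists_prop, and_assoc, ← inter_subset, ← inter_assoc]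
    refine exists_congr fun q => and_congr_right fun hq => and_congr_right fun _ =>
      and_congr_right fun _ => forall₂_congr fun _ _ => ?_
    exact (K.isCompact.inter_right hB).mem_cthickening_iff_inter_closedBall_nonempty
      (Rat.cast_nonneg.2 hq)
  rw [hsplit]
  refine .iUnion fun q => .iUnion fun _ => .inter ?_ (.biInter hTc fun _ _ => ?_)
  · exact (isOpen_subsets_of_isOpen (hB.isOpen_compl.union isOpen_thickening)).measurableSet
  · exact (isClosed_inter_nonempty_of_isClosed (hB.inter isClosed_closedBall)).measurableSet

theorem stmt9_general (d : ℕ) (R r : ℝ) (K₀ : Set (EuclideanSpace ℝ (Fin d))) :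
    @MeasurableSet (NonemptyCompacts (EuclideanSpace ℝ (Fin d)))
      (borel (NonemptyCompacts (EuclideanSpace ℝ (Fin d))))
      {K : NonemptyCompacts (EuclideanSpace ℝ (Fin d)) |
        EMetric.hausdorffEdist
          ((K : Set (EuclideanSpace ℝ (Fin d))) ∩ Metric.closedBall 0 R) K₀
          < ENNReal.ofReal r} := by
  borelize (NonemptyCompacts (EuclideanSpace ℝ (Fin d)))
  exact NonemptyCompacts.measurableSet_setOf_hausdorffEDist_inter_lt isClosed_closedBall
    (.of_separableSpace K₀) _

/-- Lemma 2.1(a): the sets `{K : hausdorffEdist (K ∩ closedBall 0 R, K₀) < r}` are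
Borel in the hyperspace of nonempty compact subsets of `ℝ^d`. -/
theorem stmt9 (d : ℕ) (hd : 1 ≤ d) (R r : ℝ) (hR : 0 < R) (hr : 0 < r)
    (K₀ : Set (EuclideanSpace ℝ (Fin d))) (hK₀c : IsCompact K₀) (hK₀ne : K₀.Nonempty) :
    @MeasurableSet (NonemptyCompacts (EuclideanSpace ℝ (Fin d)))
      (borel (NonemptyCompacts (EuclideanSpace ℝ (Fin d))))
      {K : NonemptyCompacts (EuclideanSpace ℝ (Fin d)) |
        EMetric.hausdorffEdist
          ((K : Set (EuclideanSpace ℝ (Fin d))) ∩ Metric.closedBall 0 R) K₀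
          < ENNReal.ofReal r} :=
  stmt9_general d R r K₀
end

section
/- Fix a dimension d ≥ 1. For every compact set K₀ ⊆ ℝ^d, the set {K ∈ 𝒦 : K₀ ∩ frontier(K) ≠ ∅} is an analytic subset of 𝒦, where frontier(K) denotes the topological boundary of K as a subset of ℝ^d. -/
open TopologicalSpace Metric

section aux

variable {E : Type*} [NormedAddCommGroup E]

lemma aux_closed_mem :
    IsClosed {p : E × NonemptyCompacts E | p.1 ∈ (p.2 : Set E)} := by
  have hc : Continuous fun p : E × NonemptyCompacts E => infDist p.1 (p.2 : Set E) :=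
    Metric.lipschitz_infDist.continuous
  have h : {p : E × NonemptyCompacts E | p.1 ∈ (p.2 : Set E)} =
      (fun p : E × NonemptyCompacts E => infDist p.1 (p.2 : Set E)) ⁻¹' {0} := by
    ext p
    simp only [Set.mem_setOf_eq, Set.mem_preimage, Set.mem_singleton_iff]
    rw [← p.2.isCompact.isClosed.mem_iff_infDist_zero p.2.nonempty]
  rw [h]
  exact isClosed_singleton.preimage hc

lemma aux_closed_ball (r : ℝ) :
    IsClosed {p : E × NonemptyCompacts E | closedBall p.1 r ⊆ (p.2 : Set E)} := by
  have h : {p : E × NonemptyCompacts E | closedBall p.1 r ⊆ (p.2 : Set E)} =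
      ⋂ v ∈ closedBall (0 : E) r, {p : E × NonemptyCompacts E | p.1 + v ∈ (p.2 : Set E)} := by
    ext p
    simp only [Set.mem_setOf_eq, Set.mem_iInter, mem_closedBall_zero_iff]
    constructor
    · intro h v hv
      exact h (by simpa [dist_eq_norm] using hv)
    · intro h y hy
      have : p.1 + (y - p.1) ∈ (p.2 : Set E) := by
        apply h
        simpa [dist_eq_norm] using hy
      simpa using this
  rw [h]
  refine isClosed_biInter fun v _ => ?_
  have : {p : E × NonemptyCompacts E | p.1 + v ∈ (p.2 : Set E)} =
      (fun p : E × NonemptyCompacts E => (p.1 + v, p.2)) ⁻¹'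
        {p : E × NonemptyCompacts E | p.1 ∈ (p.2 : Set E)} := rfl
  rw [this]
  exact aux_closed_mem.preimage (by fun_prop)

lemma aux_mem_interior {K : Set E} {x : E} :
    x ∈ interior K ↔ ∃ n : ℕ, closedBall x (1 / (n + 1)) ⊆ K := by
  constructor
  · intro hx
    rcases Metric.mem_nhds_iff.1 (mem_interior_iff_mem_nhds.1 hx) with ⟨ε, hε, hball⟩
    obtain ⟨n, hn⟩ := exists_nat_one_div_lt hε
    exact ⟨n, fun y hy => hball (lt_of_le_of_lt (mem_closedBall.1 hy) hn)⟩
  · rintro ⟨n, hn⟩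
    have hpos : (0 : ℝ) < 1 / (n + 1) := by positivity
    exact mem_interior.2 ⟨ball x (1 / (n + 1)), (ball_subset_closedBall).trans hn,
      isOpen_ball, mem_ball_self hpos⟩

end aux

/-- Key step of Lemma 2.1(b): for compact `K₀ ⊆ ℝ^d`, the set
`{K ∈ 𝒦 : K₀ ∩ ∂K ≠ ∅}` is analytic in the hyperspace `𝒦`. -/
theorem stmt14 (d : ℕ) (hd : 1 ≤ d)
    (K₀ : Set (EuclideanSpace ℝ (Fin d))) (hK₀c : IsCompact K₀) :
    MeasureTheory.AnalyticSet
      {K : NonemptyCompacts (EuclideanSpace ℝ (Fin d)) |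
        (K₀ ∩ frontier (K : Set (EuclideanSpace ℝ (Fin d)))).Nonempty} := by
  let E := EuclideanSpace ℝ (Fin d)
  borelize (NonemptyCompacts E)
  let A : Set (E × NonemptyCompacts E) :=
    (Prod.fst ⁻¹' K₀) ∩ {p : E × NonemptyCompacts E | p.1 ∈ (p.2 : Set E)} ∩
      (⋃ n : ℕ, {p : E × NonemptyCompacts E |
        closedBall p.1 (1 / (n + 1)) ⊆ (p.2 : Set E)})ᶜ
  have hA : A = (Prod.fst ⁻¹' K₀) ∩ {p : E × NonemptyCompacts E | p.1 ∈ (p.2 : Set E)} ∩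
      (⋃ n : ℕ, {p : E × NonemptyCompacts E |
        closedBall p.1 (1 / (n + 1)) ⊆ (p.2 : Set E)})ᶜ := rfl
  have hAm : MeasurableSet A := by
    rw [hA]
    refine (((hK₀c.isClosed.preimage continuous_fst).measurableSet.inter
      aux_closed_mem.measurableSet).inter ?_)
    exact (MeasurableSet.iUnion fun n => (aux_closed_ball _).measurableSet).compl
  have himg : {K : NonemptyCompacts E | (K₀ ∩ frontier (K : Set E)).Nonempty} =
      Prod.snd '' A := by
    ext K
    simp only [Set.mem_setOf_eq, Set.mem_image, hA, Set.mem_inter_iff, Set.mem_preimage,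
      Set.mem_compl_iff, Set.mem_iUnion, not_exists, Set.mem_setOf_eq]
    constructor
    · rintro ⟨x, hx₀, hxf⟩
      have hxK : x ∈ (K : Set E) := by
        rw [K.isCompact.isClosed.frontier_eq] at hxf
        exact hxf.1
      have hxi : x ∉ interior (K : Set E) := by
        rw [K.isCompact.isClosed.frontier_eq] at hxf
        exact hxf.2
      refine ⟨(x, K), ⟨⟨hx₀, hxK⟩, fun n hn => hxi (aux_mem_interior.2 ⟨n, hn⟩)⟩, rfl⟩
    · rintro ⟨⟨x, K'⟩, ⟨⟨hx₀, hxK⟩, hni⟩, rfl⟩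
      refine ⟨x, hx₀, ?_⟩
      rw [(K' : NonemptyCompacts E).isCompact.isClosed.frontier_eq]
      exact ⟨hxK, fun hi => by
        rcases aux_mem_interior.1 hi with ⟨n, hn⟩
        exact hni n hn⟩
  rw [himg]
  haveI : PolishSpace (E × NonemptyCompacts E) := by
    have : PolishSpace (NonemptyCompacts E) := inferInstance
    infer_instance
  exact (hAm.analyticSet).image_of_continuous continuous_snd
end

section
/- Fix a dimension d ≥ 1 and let α > 0 and R > 0. The set A = {K ∈ 𝒦 : dimH(frontier(K) ∩ ball(0,R)) < α} is universally measurable: for every finite Borel measure μ on 𝒦, A is μ-null-measurable, i.e. measurable with respect to the μ-completion of the Borel σ-algebra of 𝒦. -/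
/-!
The set is in fact Borel. One has `dimH S < a` iff `μH[q] S = 0` for some rational `q` with
`q < a`, and `∂K ∩ ball 0 R` is the countable union of the compact sets `∂K ∩ closedBall 0 r`,
`r < R` rational. For a compact set `T` and `q > 0`, `μH[q] T = 0` iff for every `n` some finite
union `U` of balls with rational radii centred on a fixed dense sequence covers `T` with
`∑ diam ^ q < 1 / n`: enlarge the sets of a cheap countable cover to such balls and use
compactness. Finally `∂K ∩ C ⊆ U`, with `C` closed and `U` open, is an `F_σ` condition on `K`:
by a Lebesgue number argument it holds iff for some `δ = 1 / (n + 1)` every point of `K` within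
`δ` of `C \ U` has its `δ`-ball inside `K`, and for fixed `δ` this condition is closed in the
Hausdorff metric.
-/

open TopologicalSpace Metric Set Filter MeasureTheory ENNReal Topology

section

variable {X : Type*} [MetricSpace X]

theorem IsCompact.disjoint_frontier_iff_exists_ball_subset {K D : Set X} (hK : IsCompact K)
    (hD : IsClosed D) :
    Disjoint (frontier K) D ↔
      ∃ n : ℕ, ∀ x ∈ K ∩ thickening (1 / (n + 1)) D, ball x (1 / (n + 1)) ⊆ K := by
  constructor
  · intro hKD
    have hcover : K ⊆ ⋃₀ {interior K, Dᶜ} := by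
      intro x hxK
      by_cases hx : x ∈ interior K
      · exact ⟨_, Or.inl rfl, hx⟩
      · refine ⟨_, Or.inr rfl, fun hxD => hKD.ne_of_mem ?_ hxD rfl⟩
        rw [hK.isClosed.frontier_eq]; exact ⟨hxK, hx⟩
    obtain ⟨δ, hδ, hleb⟩ := lebesgue_number_lemma_of_metric_sUnion hK
      (by rintro t (rfl | rfl); exacts [isOpen_interior, hD.isOpen_compl]) hcover
    obtain ⟨n, hn⟩ := exists_nat_one_div_lt hδ
    refine ⟨n, fun x ⟨hxK, hxD⟩ => ?_⟩
    obtain ⟨t, ht, hxt⟩ := hleb x hxK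
    have hsub : ball x (1 / (n + 1)) ⊆ t := (ball_subset_ball hn.le).trans hxt
    rcases ht with rfl | rfl
    · exact hsub.trans interior_subset
    · obtain ⟨z, hzD, hxz⟩ := mem_thickening_iff.1 hxD
      exact absurd hzD (hsub (mem_ball_comm.1 hxz))
  · rintro ⟨n, hn⟩
    refine Set.disjoint_left.2 fun z hzK hzD => ?_
    rw [hK.isClosed.frontier_eq] at hzK
    refine hzK.2 (mem_interior.2 ⟨_, hn z ⟨hzK.1, self_subset_thickening ?_ _ hzD⟩, isOpen_ball,
      mem_ball_self ?_⟩) <;> positivity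

namespace TopologicalSpace.NonemptyCompacts

theorem isClosed_setOf_ball_subset {V : Set X} (hV : IsOpen V) (δ : ℝ) :
    IsClosed {K : NonemptyCompacts X | ∀ x ∈ (K : Set X) ∩ V, ball x δ ⊆ K} := by
  refine isClosed_of_closure_subset fun K hK x ⟨hxK, hxV⟩ y hy => ?_
  rw [← K.isCompact.isClosed.closure_eq, Metric.mem_closure_iff]
  intro ε hε
  obtain ⟨r, hr, hrV⟩ := Metric.isOpen_iff.1 hV x hxV
  set η := min ε (min r (δ - dist y x))
  have hη : 0 < η := lt_min hε (lt_min hr (sub_pos.2 (mem_ball.1 hy)))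
  obtain ⟨L, hL, hKL⟩ := EMetric.mem_closure_iff.1 hK (ENNReal.ofReal η) (ENNReal.ofReal_pos.2 hη)
  obtain ⟨x', hx'L, hxx'⟩ := Metric.exists_edist_lt_of_hausdorffEDist_lt hxK hKL
  rw [edist_dist, ENNReal.ofReal_lt_ofReal_iff hη] at hxx'
  have hyL : y ∈ (L : Set X) := by
    refine hL x' ⟨hx'L, hrV ?_⟩ ?_
    · rw [mem_ball, dist_comm]; exact hxx'.trans_le ((min_le_right _ _).trans (min_le_left _ _))
    · rw [mem_ball]
      calc dist y x' ≤ dist y x + dist x x' := dist_triangle _ _ _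
        _ < dist y x + (δ - dist y x) := by
          gcongr; exact hxx'.trans_le ((min_le_right _ _).trans (min_le_right _ _))
        _ = δ := by ring
  rw [edist_comm] at hKL
  obtain ⟨b, hbK, hyb⟩ := Metric.exists_edist_lt_of_hausdorffEDist_lt hyL hKL
  rw [edist_dist, ENNReal.ofReal_lt_ofReal_iff hη] at hyb
  exact ⟨b, hbK, hyb.trans_le (min_le_left _ _)⟩

theorem measurableSet_setOf_disjoint_frontier [MeasurableSpace (NonemptyCompacts X)]
    [BorelSpace (NonemptyCompacts X)] {D : Set X} (hD : IsClosed D) :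
    MeasurableSet {K : NonemptyCompacts X | Disjoint (frontier (K : Set X)) D} := by
  simp_rw [fun K : NonemptyCompacts X => K.isCompact.disjoint_frontier_iff_exists_ball_subset hD,
    ofPred_exists]
  exact .iUnion fun n => (isClosed_setOf_ball_subset isOpen_thickening _).measurableSet

end TopologicalSpace.NonemptyCompacts

end

section

variable {X : Type*} [EMetricSpace X] [MeasurableSpace X] [BorelSpace X] {q : ℝ} {T : Set X}

theorem hausdorffMeasure_eq_zero_of_forall_finset_cover {ι : Type*} (hq : 0 < q) (t : ι → Set X)
    (h : ∀ n : ℕ, ∃ F : Finset ι, T ⊆ ⋃ i ∈ F, t i ∧ ∑ i ∈ F, ediam (t i) ^ q < (n : ℝ≥0∞)⁻¹) :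
    μH[q] T = 0 := by
  choose F hcov hsum using h
  have hr : Tendsto (fun n : ℕ => ((n : ℝ≥0∞)⁻¹) ^ q⁻¹) atTop (𝓝 0) := by
    simpa [Function.comp_def, ENNReal.zero_rpow_of_pos (inv_pos.2 hq)] using
      ((ENNReal.continuous_rpow_const (y := q⁻¹)).tendsto 0).comp ENNReal.tendsto_inv_nat_nhds_zero
  refine nonpos_iff_eq_zero.1 <| (Measure.hausdorffMeasure_le_liminf_sum (ι := fun n => F n) q T
    _ hr (fun n i => t i) (.of_forall fun n i => ?_) (.of_forall fun n => ?_)).trans ?_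
  · rw [ENNReal.le_rpow_inv_iff hq]
    exact (Finset.single_le_sum (f := fun i => ediam (t i) ^ q) (fun _ _ => zero_le) i.2).trans
      (hsum n).le
  · exact (hcov n).trans_eq (biUnion_eq_iUnion _ _)
  · calc liminf (fun n => ∑ i : F n, ediam (t i) ^ q) atTop
        ≤ liminf (fun n : ℕ => (n : ℝ≥0∞)⁻¹) atTop :=
          liminf_le_liminf (.of_forall fun n => ((F n).sum_coe_sort _).trans_le (hsum n).le)
      _ = 0 := ENNReal.tendsto_inv_nat_nhds_zero.liminf_eq

theorem exists_cover_tsum_ediam_rpow_lt_of_hausdorffMeasure_eq_zero (hq : 0 < q)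
    (h0 : μH[q] T = 0) {δ : ℝ≥0∞} (hδ : δ ≠ 0) :
    ∃ t : ℕ → Set X, T ⊆ ⋃ n, t n ∧ (∀ n, ediam (t n) ≠ ⊤) ∧ ∑' n, ediam (t n) ^ q < δ := by
  have h1 : (⨅ (t : ℕ → Set X) (_ : T ⊆ ⋃ n, t n) (_ : ∀ n, ediam (t n) ≤ 1),
      ∑' n, ⨆ _ : (t n).Nonempty, ediam (t n) ^ q) < δ := by
    refine lt_of_le_of_lt ?_ (pos_iff_ne_zero.2 hδ)
    rw [← h0, Measure.hausdorffMeasure_apply]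
    exact le_iSup₂ (f := fun (r : ℝ≥0∞) (_ : 0 < r) =>
      ⨅ (t : ℕ → Set X) (_ : T ⊆ ⋃ n, t n) (_ : ∀ n, ediam (t n) ≤ r),
        ∑' n, ⨆ _ : (t n).Nonempty, ediam (t n) ^ q) 1 one_pos
  simp only [iInf_lt_iff] at h1
  obtain ⟨t, hcov, hdiam, hsum⟩ := h1
  refine ⟨t, hcov, fun n => ((hdiam n).trans_lt one_lt_top).ne, hsum.trans_le' ?_⟩
  refine ENNReal.tsum_le_tsum fun n => ?_
  rcases (t n).eq_empty_or_nonempty with hn | hn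
  · simp [hn, ENNReal.zero_rpow_of_pos hq]
  · exact le_iSup_of_le hn le_rfl

end

section

variable {X : Type*} [MetricSpace X]

def ratBall (c : ℕ → X) (p : ℕ × ℚ) : Set X := ball (c p.1) p.2

variable {c : ℕ → X}

theorem exists_ratBall_superset (hc : DenseRange c) {t : Set X} (ht : ediam t ≠ ⊤) {e : ℝ}
    (he : 0 < e) :
    ∃ p, t ⊆ ratBall c p ∧ ediam (ratBall c p) ≤ ENNReal.ofReal (2 * diam t + e) := by
  rcases t.eq_empty_or_nonempty with rfl | ⟨z, hz⟩
  · exact ⟨(0, 0), empty_subset _, by simp [ratBall]⟩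
  obtain ⟨i, hi⟩ := Metric.denseRange_iff.1 hc z (e / 4) (by positivity)
  obtain ⟨ρ, hρ₁, hρ₂⟩ := exists_rat_btwn (show diam t + e / 4 < diam t + e / 2 by linarith)
  refine ⟨(i, ρ), fun w hw => ?_, ?_⟩
  · have hwz : dist w z ≤ diam t := dist_le_diam_of_mem (isBounded_iff_ediam_ne_top.2 ht) hw hz
    calc dist w (c i) ≤ dist w z + dist z (c i) := dist_triangle _ _ _
      _ < ρ := by linarith
  · calc ediam (ratBall c (i, ρ)) ≤ 2 * ENNReal.ofReal ρ := by
          rw [ratBall, ← eball_ofReal]; exact ediam_eball_le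
      _ = ENNReal.ofReal (2 * ρ) := by rw [ENNReal.ofReal_mul zero_le_two, ENNReal.ofReal_ofNat]
      _ ≤ ENNReal.ofReal (2 * diam t + e) := ENNReal.ofReal_le_ofReal (by linarith)

theorem exists_ratBall_superset_ediam_rpow_le (hc : DenseRange c) {q : ℝ} (hq : 0 ≤ q)
    {t : Set X} (ht : ediam t ≠ ⊤) {η : ℝ≥0∞} (hη : η ≠ 0) :
    ∃ p, t ⊆ ratBall c p ∧ ediam (ratBall c p) ^ q ≤ (2 * ediam t) ^ q + η := by
  have hlim : Tendsto (fun e : ℝ => ENNReal.ofReal (2 * diam t + e) ^ q) (𝓝[>] 0)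
      (𝓝 ((2 * ediam t) ^ q)) := by
    have h2 : ENNReal.ofReal (2 * diam t + 0) = 2 * ediam t := by
      rw [add_zero, ENNReal.ofReal_mul zero_le_two, ENNReal.ofReal_ofNat, diam,
        ENNReal.ofReal_toReal ht]
    rw [← h2]
    exact ((ENNReal.continuous_rpow_const.comp (ENNReal.continuous_ofReal.comp
      (continuous_const.add continuous_id))).tendsto 0).mono_left nhdsWithin_le_nhds
  have hlt : (2 * ediam t) ^ q < (2 * ediam t) ^ q + η :=
    ENNReal.lt_add_right (rpow_ne_top_of_nonneg hq (mul_ne_top ofNat_ne_top ht)) hη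
  obtain ⟨e, he, he_pos⟩ := ((hlim.eventually (gt_mem_nhds hlt)).and self_mem_nhdsWithin).exists
  obtain ⟨p, hsub, hdiam⟩ := exists_ratBall_superset hc ht he_pos
  exact ⟨p, hsub, (rpow_le_rpow hdiam hq).trans he.le⟩

variable [MeasurableSpace X] [BorelSpace X] {q : ℝ} {T : Set X}

theorem exists_finset_ratBall_cover_of_hausdorffMeasure_eq_zero (hc : DenseRange c) (hq : 0 < q)
    (hT : IsCompact T) (h0 : μH[q] T = 0) {ε : ℝ≥0∞} (hε : ε ≠ 0) :
    ∃ F : Finset (ℕ × ℚ), T ⊆ ⋃ p ∈ F, ratBall c p ∧ ∑ p ∈ F, ediam (ratBall c p) ^ q < ε := by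
  obtain ⟨δ, hδ, hδε⟩ := ENNReal.exists_nnreal_pos_mul_lt (a := 2 ^ q + 1)
    (add_ne_top.2 ⟨rpow_ne_top_of_nonneg hq.le ofNat_ne_top, one_ne_top⟩) hε
  have hδ0 : (δ : ℝ≥0∞) ≠ 0 := by simpa using hδ.ne'
  obtain ⟨t, hcov, hfin, hsum⟩ :=
    exists_cover_tsum_ediam_rpow_lt_of_hausdorffMeasure_eq_zero hq h0 hδ0
  obtain ⟨η, hη, hηsum⟩ := ENNReal.exists_pos_sum_of_countable' hδ0 ℕ
  choose p hsub hp using fun n => exists_ratBall_superset_ediam_rpow_le hc hq.le (hfin n) (hη n).ne'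
  obtain ⟨Fs, hFs⟩ := hT.elim_finite_subcover (fun n => ratBall c (p n)) (fun _ => isOpen_ball)
    (hcov.trans (iUnion_mono hsub))
  classical
  refine ⟨Fs.image p, by rwa [Finset.set_biUnion_finset_image], ?_⟩
  calc ∑ p' ∈ Fs.image p, ediam (ratBall c p') ^ q
      ≤ ∑ n ∈ Fs, ediam (ratBall c (p n)) ^ q := Finset.sum_image_le_of_nonneg fun _ _ => zero_le
    _ ≤ ∑' n, ediam (ratBall c (p n)) ^ q := ENNReal.sum_le_tsum _
    _ ≤ ∑' n, (2 ^ q * ediam (t n) ^ q + η n) := ENNReal.tsum_le_tsum fun n =>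
        (hp n).trans_eq (by rw [ENNReal.mul_rpow_of_nonneg _ _ hq.le])
    _ = 2 ^ q * ∑' n, ediam (t n) ^ q + ∑' n, η n := by rw [ENNReal.tsum_add, ENNReal.tsum_mul_left]
    _ ≤ 2 ^ q * δ + δ := by gcongr
    _ = δ * (2 ^ q + 1) := by ring
    _ < ε := hδε

theorem hausdorffMeasure_eq_zero_iff_forall_finset_ratBall (hc : DenseRange c) (hq : 0 < q)
    (hT : IsCompact T) :
    μH[q] T = 0 ↔ ∀ n : ℕ, ∃ F : Finset (ℕ × ℚ),
      T ⊆ ⋃ p ∈ F, ratBall c p ∧ ∑ p ∈ F, ediam (ratBall c p) ^ q < (n : ℝ≥0∞)⁻¹ :=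
  ⟨fun h0 n => exists_finset_ratBall_cover_of_hausdorffMeasure_eq_zero hc hq hT h0 (by simp),
    hausdorffMeasure_eq_zero_of_forall_finset_cover hq _⟩

end

theorem dimH_lt_iff_exists_rat_hausdorffMeasure_eq_zero {X : Type*} [EMetricSpace X]
    [MeasurableSpace X] [BorelSpace X] {s : Set X} {a : ℝ≥0∞} :
    dimH s < a ↔ ∃ q : ℚ, 0 < q ∧ ENNReal.ofReal q < a ∧ μH[q] s = 0 := by
  constructor
  · intro h
    obtain ⟨q, -, hsq, hqa⟩ := ENNReal.lt_iff_exists_rat_btwn.1 h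
    have hq : (0 : ℝ) < q := Real.toNNReal_pos.1 (ENNReal.coe_pos.1 (zero_le.trans_lt hsq))
    refine ⟨q, by exact_mod_cast hq, hqa, ?_⟩
    simpa [Real.coe_toNNReal _ hq.le] using hausdorffMeasure_of_dimH_lt hsq
  · rintro ⟨q, hq, hqa, h0⟩
    refine lt_of_le_of_lt (dimH_le_of_hausdorffMeasure_ne_top (d := Real.toNNReal q) ?_) hqa
    rw [Real.coe_toNNReal _ (by positivity), h0]
    exact zero_ne_top

theorem measure_inter_ball_eq_zero_iff {X : Type*} [PseudoMetricSpace X] [MeasurableSpace X]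
    (μ : Measure X) (s : Set X) (x : X) (R : ℝ) :
    μ (s ∩ ball x R) = 0 ↔ ∀ r : ℚ, (r : ℝ) < R → μ (s ∩ closedBall x r) = 0 := by
  refine ⟨fun h r hr =>
      measure_mono_null (inter_subset_inter_right _ (closedBall_subset_ball hr)) h,
    fun h => measure_mono_null (fun y ⟨hys, hy⟩ => ?_)
      (measure_iUnion_null fun r : {r : ℚ // (r : ℝ) < R} => h r r.2)⟩
  obtain ⟨r, hyr, hrR⟩ := exists_rat_btwn (mem_ball.1 hy)
  exact mem_iUnion.2 ⟨⟨r, hrR⟩, hys, mem_closedBall.2 hyr.le⟩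

namespace TopologicalSpace.NonemptyCompacts

variable {X : Type*} [MetricSpace X] [SeparableSpace X] [Nonempty X] [MeasurableSpace X]
  [BorelSpace X] [MeasurableSpace (NonemptyCompacts X)] [BorelSpace (NonemptyCompacts X)]

theorem measurableSet_setOf_hausdorffMeasure_frontier_inter_eq_zero {q : ℝ} (hq : 0 < q)
    {C : Set X} (hC : IsClosed C) :
    MeasurableSet {K : NonemptyCompacts X | μH[q] (frontier (K : Set X) ∩ C) = 0} := by
  obtain ⟨c, hc⟩ := exists_dense_seq X
  have hT (K : NonemptyCompacts X) : IsCompact (frontier (K : Set X) ∩ C) :=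
    (K.isCompact.of_isClosed_subset isClosed_frontier
      K.isCompact.isClosed.frontier_subset).inter_right hC
  simp_rw [hausdorffMeasure_eq_zero_iff_forall_finset_ratBall hc hq (hT _), ofPred_forall,
    ofPred_exists, ofPred_and]
  refine .iInter fun n => .iUnion fun F => .inter ?_ (.const _)
  have hU : IsOpen (⋃ p ∈ F, ratBall c p) := isOpen_biUnion fun _ _ => isOpen_ball
  convert measurableSet_setOf_disjoint_frontier (hC.sdiff hU) using 3
  rw [disjoint_iff_inter_eq_empty, ← inter_sdiff_assoc, sdiff_eq_empty]

theorem measurableSet_setOf_dimH_frontier_inter_ball_lt (x : X) (R : ℝ) (a : ℝ≥0∞) :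
    MeasurableSet {K : NonemptyCompacts X | dimH (frontier (K : Set X) ∩ ball x R) < a} := by
  simp_rw [dimH_lt_iff_exists_rat_hausdorffMeasure_eq_zero, measure_inter_ball_eq_zero_iff,
    ← exists_prop, ofPred_exists, ofPred_forall]
  exact .iUnion fun q => .iUnion fun hq => .iUnion fun _ => .iInter fun r => .iInter fun _ =>
    measurableSet_setOf_hausdorffMeasure_frontier_inter_eq_zero (Rat.cast_pos.2 hq)
      isClosed_closedBall

end TopologicalSpace.NonemptyCompacts

theorem stmt15_general (d : ℕ) (α R : ℝ) :
    ∀ μ : @MeasureTheory.Measure (NonemptyCompacts (EuclideanSpace ℝ (Fin d)))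
        (borel (NonemptyCompacts (EuclideanSpace ℝ (Fin d)))),
      @MeasureTheory.IsFiniteMeasure _ _ μ →
      @MeasureTheory.NullMeasurableSet (NonemptyCompacts (EuclideanSpace ℝ (Fin d)))
        (borel (NonemptyCompacts (EuclideanSpace ℝ (Fin d))))
        {K : NonemptyCompacts (EuclideanSpace ℝ (Fin d)) |
          dimH (frontier (K : Set (EuclideanSpace ℝ (Fin d))) ∩ Metric.ball 0 R)
            < ENNReal.ofReal α} μ := by
  intro μ _
  let _ := borel (NonemptyCompacts (EuclideanSpace ℝ (Fin d)))
  have : BorelSpace (NonemptyCompacts (EuclideanSpace ℝ (Fin d))) := ⟨rfl⟩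
  exact (NonemptyCompacts.measurableSet_setOf_dimH_frontier_inter_ball_lt 0 R _).nullMeasurableSet

/-- Lemma 2.1(b): `{K ∈ 𝒦 : dimH(∂K ∩ B(0,R)) < α}` is universally measurable, i.e.
null-measurable for every finite Borel measure on the hyperspace `𝒦`. -/
theorem stmt15 (d : ℕ) (hd : 1 ≤ d) (α R : ℝ) (hα : 0 < α) (hR : 0 < R) :
    ∀ μ : @MeasureTheory.Measure (NonemptyCompacts (EuclideanSpace ℝ (Fin d)))
        (borel (NonemptyCompacts (EuclideanSpace ℝ (Fin d)))),
      @MeasureTheory.IsFiniteMeasure _ _ μ →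
      @MeasureTheory.NullMeasurableSet (NonemptyCompacts (EuclideanSpace ℝ (Fin d)))
        (borel (NonemptyCompacts (EuclideanSpace ℝ (Fin d))))
        {K : NonemptyCompacts (EuclideanSpace ℝ (Fin d)) |
          dimH (frontier (K : Set (EuclideanSpace ℝ (Fin d))) ∩ Metric.ball 0 R)
            < ENNReal.ofReal α} μ :=
  stmt15_general d α R
end

section
/- Fix a dimension d ≥ 1, let R₁ > 0 and U = ball(0,R₁) ⊆ ℝ^d. For every nonempty compact set K₀ ⊆ ℝ^d, the function on C(U, ℝ) (continuous real-valued functions on U with the compact-open topology and its Borel σ-algebra) sending f to hausdorffEdist(closure{x ∈ U : f(x) > 0}, K₀) ∈ [0,∞] is Borel measurable, where the closure is taken in ℝ^d. This expresses Borel measurability of the support map f ↦ closure{x : f(x) > 0} from C(U) into the space of compact subsets of closedBall(0,R₁). -/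
open TopologicalSpace Metric

/-! The Hausdorff distance does not see closures, so the open set `{f > 0}` may be replaced by
its trace on a countable dense subset `D` of the ball, and `K₀` by a countable dense subset of
itself. The distance is then a countable supremum of infima of constants switched on by the
events `f y > 0`, `y ∈ D`, which are Borel because evaluation at a point is continuous. -/

open MeasureTheory Set

section Measurability

variable {Ω : Type*} [MeasurableSpace Ω]

theorem measurable_iSup_mem_const {α : Type*} [CompleteLattice α] [MeasurableSpace α]
    {A : Set Ω} (hA : MeasurableSet A) (c : α) : Measurable fun ω => ⨆ _ : ω ∈ A, c := by
  classical
  simp only [iSup_eq_if]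
  exact Measurable.ite hA measurable_const measurable_const

theorem measurable_iInf_mem_const {α : Type*} [CompleteLattice α] [MeasurableSpace α]
    {A : Set Ω} (hA : MeasurableSet A) (c : α) : Measurable fun ω => ⨅ _ : ω ∈ A, c := by
  classical
  simp only [iInf_eq_if]
  exact Measurable.ite hA measurable_const measurable_const

theorem measurable_hausdorffEDist_image_of_countable {ι E : Type*} [PseudoEMetricSpace E]
    (p : ι → E) {D : Set ι} (hD : D.Countable) {A : ι → Set Ω}
    (hA : ∀ i, MeasurableSet (A i)) {K : Set E} (hK : K.Countable) :
    Measurable fun ω => hausdorffEDist (p '' {i ∈ D | ω ∈ A i}) K := by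
  simp only [hausdorffEDist_def, infEDist, iSup_image, iInf_image, mem_ofPred_eq, iSup_and,
    iInf_and]
  exact .max (.biSup D hD fun i _ => measurable_iSup_mem_const (hA i) _)
    (.biSup K hK fun k _ => .biInf D hD fun i _ => measurable_iInf_mem_const (hA i) _)

end Measurability

theorem Dense.closure_image_inter_of_isOpen {Y E : Type*} [TopologicalSpace Y]
    [TopologicalSpace E] {D S : Set Y} (hD : Dense D) (hS : IsOpen S) {f : Y → E}
    (hf : Continuous f) : closure (f '' (D ∩ S)) = closure (f '' S) := by
  refine (closure_mono (image_mono inter_subset_right)).antisymm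
    (closure_minimal ?_ isClosed_closure)
  calc f '' S ⊆ f '' closure (S ∩ D) := image_mono (hD.open_subset_closure_inter hS)
    _ ⊆ closure (f '' (D ∩ S)) := by
      rw [inter_comm]; exact image_closure_subset_closure_image hf

theorem measurable_hausdorffEDist_image_of_isOpen {Ω Y E : Type*} [MeasurableSpace Ω]
    [TopologicalSpace Y] [SeparableSpace Y] [PseudoEMetricSpace E] {f : Y → E}
    (hf : Continuous f) {S : Ω → Set Y} (hSo : ∀ ω, IsOpen (S ω))
    (hS : ∀ y, MeasurableSet {ω | y ∈ S ω}) {K : Set E} (hK : IsSeparable K) :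
    Measurable fun ω => hausdorffEDist (f '' S ω) K := by
  obtain ⟨D, hDc, hDd⟩ := exists_countable_dense Y
  obtain ⟨K', hK'K, hK'c, hKK'⟩ := hK.exists_countable_dense_subset
  have hclK : closure K' = closure K :=
    (closure_mono hK'K).antisymm (closure_minimal hKK' isClosed_closure)
  have hdist (ω : Ω) :
      hausdorffEDist (f '' S ω) K = hausdorffEDist (f '' (D ∩ S ω)) K' := by
    rw [← hausdorffEDist_closure, ← hDd.closure_image_inter_of_isOpen (hSo ω) hf, ← hclK,
      hausdorffEDist_closure]
  simp_rw [hdist]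
  exact measurable_hausdorffEDist_image_of_countable f hDc hS hK'c

theorem stmt18_general (d : ℕ) (R₁ : ℝ)
    (K₀ : Set (EuclideanSpace ℝ (Fin d))) :
    @Measurable C(↥(Metric.ball (0 : EuclideanSpace ℝ (Fin d)) R₁), ℝ) ENNReal
      (borel C(↥(Metric.ball (0 : EuclideanSpace ℝ (Fin d)) R₁), ℝ)) _
      (fun f =>
        EMetric.hausdorffEdist
          (closure ((Subtype.val) ''
            {y : ↥(Metric.ball (0 : EuclideanSpace ℝ (Fin d)) R₁) | 0 < f y}))
          K₀) := by
  borelize C(↥(Metric.ball (0 : EuclideanSpace ℝ (Fin d)) R₁), ℝ)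
  show Measurable fun f => hausdorffEDist (closure _) K₀
  simp_rw [hausdorffEDist_closure_left]
  exact measurable_hausdorffEDist_image_of_isOpen continuous_subtype_val
    (fun f => isOpen_lt continuous_const f.continuous)
    (fun y => measurableSet_lt measurable_const (continuous_eval_const y).measurable)
    (.of_separableSpace K₀)

/-- Borel measurability of the support map (used in Proposition 2.2(b)):
`f ↦ hausdorffEdist(closure {x ∈ B(0,R₁) : f(x) > 0}, K₀)` is Borel on `C(B(0,R₁), ℝ)`
with the compact-open topology. -/
theorem stmt18 (d : ℕ) (hd : 1 ≤ d) (R₁ : ℝ) (hR₁ : 0 < R₁)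
    (K₀ : Set (EuclideanSpace ℝ (Fin d))) (hK₀c : IsCompact K₀) (hK₀ne : K₀.Nonempty) :
    @Measurable C(↥(Metric.ball (0 : EuclideanSpace ℝ (Fin d)) R₁), ℝ) ENNReal
      (borel C(↥(Metric.ball (0 : EuclideanSpace ℝ (Fin d)) R₁), ℝ)) _
      (fun f =>
        EMetric.hausdorffEdist
          (closure ((Subtype.val) ''
            {y : ↥(Metric.ball (0 : EuclideanSpace ℝ (Fin d)) R₁) | 0 < f y}))
          K₀) :=
  stmt18_general d R₁ K₀
end
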